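/- arXiv:2510.06736 — 5 statements merged into one kernel-verified Lean document; each statement's English description precedes it below -/
import Mathlib

section
/- For the shortened 3n+1 map ψ(n) = n/2 if n even, (3n+1)/2 if n odd, and its generating functions f_k(z) = Σ_{n=0}^∞ ψ_k(n) z^n (convergent for |z| < 1, where ψ_k is the k-th iterate with ψ_0(n) = n), the functional recursion f_k(z) = f_{k−1}(z²) + (1/(3 z^{1/3})) Σ_{l=0}^2 ζ^l f_{k−1}(z^{2/3} ζ^l) holds for all z in the punctured open unit disk and all k ≥ 1, where ζ = e^{2πi/3} and a fixed branch of z^{1/3} is chosen. -/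
open Real

/-- The shortened Collatz (`3n+1`) map. -/
def shortCollatz (n : ℕ) : ℕ := if n % 2 = 0 then n / 2 else (3 * n + 1) / 2

lemma shortCollatz_iter_le (j n : ℕ) : shortCollatz^[j] n + 1 ≤ 3 ^ j * (n + 1) := by
  induction j generalizing n with
  | zero => simp
  | succ j ih =>
    rw [Function.iterate_succ_apply']
    have h1 : shortCollatz (shortCollatz^[j] n) + 1 ≤ 3 * (shortCollatz^[j] n + 1) := by
      unfold shortCollatz; split <;> omega
    calc shortCollatz (shortCollatz^[j] n) + 1 ≤ 3 * (shortCollatz^[j] n + 1) := h1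
      _ ≤ 3 * (3 ^ j * (n + 1)) := by exact Nat.mul_le_mul_left 3 (ih n)
      _ = 3 ^ (j + 1) * (n + 1) := by ring

lemma summable_of_linear_bound {C : ℝ} {w : ℂ} (hw : ‖w‖ < 1) {f : ℕ → ℂ}
    (hf : ∀ n, ‖f n‖ ≤ C * ((n : ℝ) + 1)) :
    Summable fun n : ℕ => f n * w ^ n := by
  apply Summable.of_norm
  have h1 : Summable fun n : ℕ => C * (((n : ℝ) + 1) * ‖w‖ ^ n) := by
    apply Summable.mul_left
    have h2 : Summable fun n : ℕ => (n : ℝ) ^ 1 * ‖w‖ ^ n :=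
      summable_pow_mul_geometric_of_norm_lt_one 1 (by simpa using hw)
    have h3 : Summable fun n : ℕ => ‖w‖ ^ n :=
      summable_geometric_of_lt_one (norm_nonneg w) hw
    simpa [add_mul, pow_one] using h2.add h3
  refine Summable.of_nonneg_of_le (fun n => norm_nonneg _) (fun n => ?_) h1
  have hwn : (0 : ℝ) ≤ ‖w‖ ^ n := pow_nonneg (norm_nonneg w) n
  calc ‖f n * w ^ n‖ = ‖f n‖ * ‖w‖ ^ n := by
        simp [map_mul, map_pow]
    _ ≤ (C * ((n : ℝ) + 1)) * ‖w‖ ^ n := mul_le_mul_of_nonneg_right (hf n) hwn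
    _ = C * (((n : ℝ) + 1) * ‖w‖ ^ n) := by ring

lemma shortCollatz_abs_le (j n : ℕ) :
    ‖((shortCollatz^[j] n : ℕ) : ℂ)‖ ≤ (3 : ℝ) ^ j * ((n : ℝ) + 1) := by
  rw [Complex.norm_natCast]
  have h := shortCollatz_iter_le j n
  have h2 : (shortCollatz^[j] n : ℝ) ≤ ((3 ^ j * (n + 1) : ℕ) : ℝ) := by
    exact_mod_cast Nat.le_of_succ_le h
  calc (shortCollatz^[j] n : ℝ) ≤ ((3 ^ j * (n + 1) : ℕ) : ℝ) := h2
    _ = (3 : ℝ) ^ j * ((n : ℝ) + 1) := by push_cast; ring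

lemma summable_base (j : ℕ) {w : ℂ} (hw : ‖w‖ < 1) :
    Summable fun n : ℕ => (shortCollatz^[j] n : ℂ) * w ^ n :=
  summable_of_linear_bound hw (fun n => shortCollatz_abs_le j n)

set_option maxHeartbeats 1600000 in
/-- Berg–Meinardus functional recursion for the generating functions of the
shortened `3n+1` dynamics, on the punctured open unit disk, with `ζ = e^{2πi/3}`
and the principal branch of `z^{1/3}`. -/
theorem stmt10 (k : ℕ) (hk : 1 ≤ k) (z : ℂ) (hz0 : z ≠ 0) (hz1 : ‖z‖ < 1) :
    (∑' n : ℕ, (shortCollatz^[k] n : ℂ) * z ^ n) =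
      (∑' n : ℕ, (shortCollatz^[k - 1] n : ℂ) * (z ^ 2) ^ n) +
      (1 / (3 * z ^ ((1 : ℂ) / 3))) *
        ∑ l ∈ Finset.range 3,
          Complex.exp (2 * π * Complex.I / 3) ^ l *
            ∑' n : ℕ, (shortCollatz^[k - 1] n : ℂ) *
              (z ^ ((2 : ℂ) / 3) * Complex.exp (2 * π * Complex.I / 3) ^ l) ^ n := by
  obtain ⟨j, rfl⟩ : ∃ j, k = j + 1 := ⟨k - 1, by omega⟩
  simp only [Nat.add_sub_cancel]
  set ζ : ℂ := Complex.exp (2 * π * Complex.I / 3) with hζdef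
  set w : ℂ := z ^ ((2 : ℂ) / 3) with hwdef
  set a : ℕ → ℂ := fun n => (shortCollatz^[j] n : ℂ) with hadef
  -- basic facts
  have hprim : IsPrimitiveRoot ζ 3 := by
    have := Complex.isPrimitiveRoot_exp 3 (by norm_num)
    simpa using this
  have hζ3 : ζ ^ 3 = 1 := hprim.pow_eq_one
  have hζabs : ‖ζ‖ = 1 := by
    rw [hζdef, show (2 * (π : ℂ) * Complex.I / 3) = ((2 * π / 3 : ℝ) : ℂ) * Complex.I by
      push_cast; ring]
    exact Complex.norm_exp_ofReal_mul_I _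
  have habsw : ‖w‖ < 1 := by
    rw [hwdef, Complex.norm_cpow_of_ne_zero hz0,
      show ((2 : ℂ) / 3).re = (2 / 3 : ℝ) by norm_num [Complex.div_re],
      show ((2 : ℂ) / 3).im = (0 : ℝ) by norm_num [Complex.div_im],
      mul_zero, Real.exp_zero, div_one]
    exact Real.rpow_lt_one (norm_nonneg z) hz1 (by norm_num)
  have h13 : z ^ ((1 : ℂ) / 3) ≠ 0 := by
    simp [Complex.cpow_eq_zero_iff, hz0]
  -- cube-root power identities
  have hw3 : w ^ 3 = z ^ 2 := by
    rw [hwdef, ← Complex.cpow_nat_mul,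
      show ((3 : ℕ) : ℂ) * (2 / 3) = ((2 : ℕ) : ℂ) by push_cast; ring,
      Complex.cpow_natCast]
  have hw2 : w ^ 2 = z * z ^ ((1 : ℂ) / 3) := by
    rw [hwdef, ← Complex.cpow_nat_mul,
      show ((2 : ℕ) : ℂ) * (2 / 3) = 1 + 1 / 3 by push_cast; ring,
      Complex.cpow_add _ _ hz0, Complex.cpow_one]
  have hwpow : ∀ m : ℕ, w ^ (3 * m + 2) = (z ^ 2) ^ m * (z * z ^ ((1 : ℂ) / 3)) := by
    intro m
    rw [pow_add, pow_mul, hw3, hw2]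
  -- Collatz values
  have hψe : ∀ m : ℕ, shortCollatz (2 * m) = m := by
    intro m; simp only [shortCollatz]; split <;> omega
  have hψo : ∀ m : ℕ, shortCollatz (2 * m + 1) = 3 * m + 2 := by
    intro m; simp only [shortCollatz]; split <;> omega
  -- LHS decomposition
  have habsz2 : ‖z ^ 2‖ < 1 := by
    rw [norm_pow]
    calc ‖z‖ ^ 2 ≤ ‖z‖ := by nlinarith [norm_nonneg z]
      _ < 1 := hz1
  have hLHS : (∑' n : ℕ, (shortCollatz^[j + 1] n : ℂ) * z ^ n)
      = (∑' m : ℕ, a m * (z ^ 2) ^ m) + z * ∑' m : ℕ, a (3 * m + 2) * (z ^ 2) ^ m := by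
    have he' : Summable fun m : ℕ => (shortCollatz^[j + 1] (2 * m) : ℂ) * (z ^ 2) ^ m := by
      refine summable_of_linear_bound (C := 2 * 3 ^ (j+1)) habsz2 (fun m => ?_)
      calc ‖((shortCollatz^[j + 1] (2 * m) : ℕ) : ℂ)‖
          ≤ (3 : ℝ) ^ (j + 1) * ((2 * m : ℕ) + 1) := shortCollatz_abs_le (j + 1) (2 * m)
        _ ≤ (2 * 3 ^ (j + 1)) * ((m : ℝ) + 1) := by push_cast; nlinarith [pow_pos (by norm_num : (0:ℝ) < 3) (j + 1)]
    have ho' : Summable fun m : ℕ => (shortCollatz^[j + 1] (2 * m + 1) : ℂ) * (z ^ 2) ^ m := by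
      refine summable_of_linear_bound (C := 2 * 3 ^ (j+1)) habsz2 (fun m => ?_)
      calc ‖((shortCollatz^[j + 1] (2 * m + 1) : ℕ) : ℂ)‖
          ≤ (3 : ℝ) ^ (j + 1) * ((2 * m + 1 : ℕ) + 1) := shortCollatz_abs_le (j + 1) (2 * m + 1)
        _ ≤ (2 * 3 ^ (j + 1)) * ((m : ℝ) + 1) := by push_cast; nlinarith [pow_pos (by norm_num : (0:ℝ) < 3) (j + 1)]
    have he : Summable fun m : ℕ => (shortCollatz^[j + 1] (2 * m) : ℂ) * z ^ (2 * m) :=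
      he'.congr (fun m => by rw [pow_mul])
    have ho : Summable fun m : ℕ => (shortCollatz^[j + 1] (2 * m + 1) : ℂ) * z ^ (2 * m + 1) :=
      (ho'.mul_right z).congr (fun m => by rw [mul_assoc, ← pow_mul, ← pow_succ])
    rw [← tsum_even_add_odd he ho]
    congr 1
    · exact tsum_congr fun m => by
        rw [Function.iterate_succ_apply, hψe, pow_mul]
    · rw [← tsum_mul_left]
      exact tsum_congr fun m => by
        rw [Function.iterate_succ_apply, hψo, pow_add, pow_mul, pow_one]
        ring
  rw [hLHS]
  congr 1
  -- Now the second part: the root-of-unity filter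
  have hterm : ∀ l ∈ Finset.range 3,
      ζ ^ l * ∑' n : ℕ, a n * (w * ζ ^ l) ^ n
        = ∑' n : ℕ, a n * w ^ n * (ζ ^ (n + 1)) ^ l := by
    intro l _
    rw [← tsum_mul_left]
    refine tsum_congr fun n => ?_
    have h1 : (ζ ^ (n + 1)) ^ l = ζ ^ l * (ζ ^ l) ^ n := by
      rw [← pow_mul, mul_comm (n + 1) l, pow_mul, pow_succ']
    rw [mul_pow, h1]; ring
  rw [Finset.sum_congr rfl hterm]
  have hsum_l : ∀ l ∈ Finset.range 3,
      Summable fun n : ℕ => a n * w ^ n * (ζ ^ (n + 1)) ^ l := by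
    intro l _
    have h := summable_of_linear_bound (C := (3 : ℝ) ^ j) habsw
      (f := fun n : ℕ => a n * (ζ ^ (n + 1)) ^ l) (fun n => by
        rw [norm_mul, norm_pow, norm_pow, hζabs, one_pow, one_pow, mul_one]
        exact shortCollatz_abs_le j n)
    exact h.congr (fun n => by ring)
  rw [← Summable.tsum_finsetSum hsum_l]
  have hgeom : ∀ n : ℕ, (∑ l ∈ Finset.range 3, (ζ ^ (n + 1)) ^ l)
      = if (3 : ℕ) ∣ (n + 1) then (3 : ℂ) else 0 := by
    intro n
    by_cases h : (3 : ℕ) ∣ (n + 1)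
    · rw [if_pos h, (hprim.pow_eq_one_iff_dvd _).2 h]
      simp
    · rw [if_neg h]
      have h1 : ζ ^ (n + 1) ≠ 1 := fun he => h ((hprim.pow_eq_one_iff_dvd _).1 he)
      rw [geom_sum_eq h1]
      have h2 : (ζ ^ (n + 1)) ^ 3 = 1 := by
        rw [← pow_mul, mul_comm, pow_mul, hζ3, one_pow]
      rw [h2]; simp
  have hstep : (∑' n : ℕ, ∑ l ∈ Finset.range 3, a n * w ^ n * (ζ ^ (n + 1)) ^ l)
      = ∑' n : ℕ, a n * w ^ n * (if (3 : ℕ) ∣ (n + 1) then (3 : ℂ) else 0) := by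
    refine tsum_congr fun n => ?_
    rw [← Finset.mul_sum, hgeom]
  rw [hstep]
  -- reindex along n = 3m+2
  have hinj : Function.Injective (fun m : ℕ => 3 * m + 2) := fun x y h => by
    simp only at h; omega
  have hre : (∑' n : ℕ, a n * w ^ n * (if (3 : ℕ) ∣ (n + 1) then (3 : ℂ) else 0))
      = ∑' m : ℕ, a (3 * m + 2) * w ^ (3 * m + 2) * 3 := by
    rw [← Function.Injective.tsum_eq hinj]
    · refine tsum_congr fun m => ?_
      have h3 : (3 : ℕ) ∣ (3 * m + 2 + 1) := ⟨m + 1, by ring⟩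
      simp only [h3, if_pos]
    · intro n hn
      have h3 : (3 : ℕ) ∣ (n + 1) := by
        by_contra h
        apply hn
        simp [h]
      obtain ⟨c, hc⟩ := h3
      exact ⟨c - 1, by simp only; omega⟩
  rw [hre]
  have hfin : (∑' m : ℕ, a (3 * m + 2) * w ^ (3 * m + 2) * 3)
      = (3 * (z * z ^ ((1 : ℂ) / 3))) * ∑' m : ℕ, a (3 * m + 2) * (z ^ 2) ^ m := by
    rw [← tsum_mul_left]
    refine tsum_congr fun m => ?_
    rw [hwpow m]; ring
  rw [hfin, ← mul_assoc]
  have hcoef : (1 / (3 * z ^ ((1 : ℂ) / 3))) * (3 * (z * z ^ ((1 : ℂ) / 3))) = z := by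
    field_simp
  rw [hcoef]
end

section
/- For the shortened 3n−1 map γ(n) = n/2 if n even, (3n−1)/2 if n odd, the generating functions h̃_k(z) = Σ_{n=0}^∞ γ_k(n) z^n satisfy h̃_k(z) = h̃_{k−1}(z²) + (z^{1/3}/3) Σ_{l=0}^2 ζ^{−l} h̃_{k−1}(z^{2/3} ζ^l) for all z in the punctured open unit disk and all k ≥ 1, where ζ = e^{2πi/3}. -/
open Real

/-- The shortened `3n−1` map. -/
def shortCollatzMinus (n : ℕ) : ℕ := if n % 2 = 0 then n / 2 else (3 * n - 1) / 2

lemma scm_le (n : ℕ) : shortCollatzMinus n ≤ 2 * n := by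
  unfold shortCollatzMinus; split <;> omega

lemma scm_iter_le (j n : ℕ) : shortCollatzMinus^[j] n ≤ 2 ^ j * n := by
  induction j with
  | zero => simp
  | succ j ih =>
    rw [Function.iterate_succ_apply']
    calc shortCollatzMinus (shortCollatzMinus^[j] n) ≤ 2 * (shortCollatzMinus^[j] n) := scm_le _
      _ ≤ 2 * (2 ^ j * n) := by omega
      _ = 2 ^ (j + 1) * n := by ring

lemma scm_summable (j : ℕ) (x : ℂ) (hx : ‖x‖ < 1) :
    Summable (fun n : ℕ => (shortCollatzMinus^[j] n : ℂ) * x ^ n) := by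
  apply Summable.of_norm_bounded (g := fun n : ℕ => (2 ^ j : ℝ) * ((n : ℝ) ^ 1 * ‖x‖ ^ n))
  · exact (summable_pow_mul_geometric_of_norm_lt_one 1
      (r := ‖x‖) (by simpa [abs_of_nonneg (norm_nonneg x)] using hx)).mul_left _
  · intro n
    have h1 : ‖(shortCollatzMinus^[j] n : ℂ) * x ^ n‖
        = (shortCollatzMinus^[j] n : ℝ) * ‖x‖ ^ n := by
      simp [map_pow, abs_of_nonneg]
    rw [h1, pow_one]
    have h2 : (shortCollatzMinus^[j] n : ℝ) ≤ (2 : ℝ) ^ j * n := by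
      have := scm_iter_le j n
      exact_mod_cast this
    calc (shortCollatzMinus^[j] n : ℝ) * ‖x‖ ^ n
        ≤ ((2 : ℝ) ^ j * n) * ‖x‖ ^ n := by
          apply mul_le_mul_of_nonneg_right h2 (pow_nonneg (norm_nonneg x) n)
      _ = (2 ^ j : ℝ) * ((n : ℝ) * ‖x‖ ^ n) := by ring

/-- Berg–Opfer functional recursion for the generating functions of the shortened
`3n−1` dynamics, on the punctured open unit disk, with `ζ = e^{2πi/3}` and the
principal branch of `z^{1/3}`. -/
theorem stmt11 (k : ℕ) (hk : 1 ≤ k) (z : ℂ) (hz0 : z ≠ 0) (hz1 : ‖z‖ < 1) :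
    (∑' n : ℕ, (shortCollatzMinus^[k] n : ℂ) * z ^ n) =
      (∑' n : ℕ, (shortCollatzMinus^[k - 1] n : ℂ) * (z ^ 2) ^ n) +
      (z ^ ((1 : ℂ) / 3) / 3) *
        ∑ l ∈ Finset.range 3,
          Complex.exp (2 * π * Complex.I / 3) ^ (-(l : ℤ)) *
            ∑' n : ℕ, (shortCollatzMinus^[k - 1] n : ℂ) *
              (z ^ ((2 : ℂ) / 3) * Complex.exp (2 * π * Complex.I / 3) ^ l) ^ n := by
  obtain ⟨j, rfl⟩ : ∃ j, k = j + 1 := ⟨k - 1, by omega⟩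
  simp only [Nat.add_sub_cancel]
  set ζ : ℂ := Complex.exp (2 * π * Complex.I / 3) with hζdef
  have hζ : IsPrimitiveRoot ζ 3 := Complex.isPrimitiveRoot_exp 3 (by norm_num)
  have hζ3 : ζ ^ 3 = 1 := hζ.pow_eq_one
  have hζ0 : ζ ≠ 0 := Complex.exp_ne_zero _
  set g : ℕ → ℂ := fun n => (shortCollatzMinus^[j] n : ℂ) with hg
  set u : ℂ := z ^ ((2 : ℂ) / 3) with hu
  set w : ℂ := z ^ ((1 : ℂ) / 3) with hw
  -- |ζ| = 1
  have habsζ : ‖ζ‖ = 1 := by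
    have h1 : (2 * (π : ℂ) * Complex.I / 3) = ((2 * π / 3 : ℝ) : ℂ) * Complex.I := by
      push_cast; ring
    rw [hζdef, h1, Complex.norm_exp_ofReal_mul_I]
  -- |u| < 1
  have habsu : ‖u‖ < 1 := by
    rw [hu, Complex.norm_cpow_of_ne_zero hz0]
    have h2 : ((2 : ℂ) / 3) = ((2 / 3 : ℝ) : ℂ) := by norm_num
    rw [h2, Complex.ofReal_re, Complex.ofReal_im, mul_zero, Real.exp_zero, div_one]
    exact Real.rpow_lt_one (norm_nonneg z) hz1 (by norm_num)
  have habsr : ∀ l : ℕ, ‖u * ζ ^ l‖ < 1 := by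
    intro l
    rw [norm_mul, norm_pow, habsζ, one_pow, mul_one]
    exact habsu
  -- Step 1: split the LHS into even and odd parts
  have hsum_full : Summable (fun n : ℕ => (shortCollatzMinus^[j + 1] n : ℂ) * z ^ n) :=
    scm_summable (j + 1) z hz1
  have hse : Summable (fun m : ℕ =>
      (shortCollatzMinus^[j + 1] (2 * m) : ℂ) * z ^ (2 * m)) := by
    have h := hsum_full.comp_injective (i := fun m : ℕ => 2 * m)
      (fun a b h => by simp only [] at h; omega)
    exact h
  have hso : Summable (fun m : ℕ =>
      (shortCollatzMinus^[j + 1] (2 * m + 1) : ℂ) * z ^ (2 * m + 1)) := by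
    have h := hsum_full.comp_injective (i := fun m : ℕ => 2 * m + 1)
      (fun a b h => by simp only [] at h; omega)
    exact h
  have hLHS : (∑' n : ℕ, (shortCollatzMinus^[j + 1] n : ℂ) * z ^ n)
      = (∑' m : ℕ, g m * (z ^ 2) ^ m) + ∑' m : ℕ, g (3 * m + 1) * z ^ (2 * m + 1) := by
    rw [← tsum_even_add_odd (f := fun n : ℕ => (shortCollatzMinus^[j + 1] n : ℂ) * z ^ n) hse hso]
    congr 1
    · apply tsum_congr
      intro m
      rw [Function.iterate_succ_apply]
      have h1 : shortCollatzMinus (2 * m) = m := by unfold shortCollatzMinus; split <;> omega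
      rw [h1, ← pow_mul]
    · apply tsum_congr
      intro m
      rw [Function.iterate_succ_apply]
      have h1 : shortCollatzMinus (2 * m + 1) = 3 * m + 1 := by
        unfold shortCollatzMinus; split <;> omega
      rw [h1]
  rw [hLHS]
  congr 1
  -- Step 2: roots-of-unity filter on the RHS
  have hsuml : ∀ l : ℕ, Summable (fun n : ℕ => g n * (u * ζ ^ l) ^ n) := fun l =>
    scm_summable j _ (habsr l)
  have hterm : ∀ (n l : ℕ),
      ζ ^ (-(l : ℤ)) * (g n * (u * ζ ^ l) ^ n) = g n * u ^ n * (ζ ^ ((n : ℤ) - 1)) ^ l := by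
    intro n l
    have h1 : ζ ^ (-(l : ℤ)) * (ζ ^ l) ^ n = (ζ ^ ((n : ℤ) - 1)) ^ l := by
      rw [← zpow_natCast ζ l, ← zpow_natCast (ζ ^ ((l : ℤ))) n,
        ← zpow_natCast (ζ ^ ((n : ℤ) - 1)) l, ← zpow_mul, ← zpow_mul, ← zpow_add₀ hζ0]
      congr 1
      ring_nf
    calc ζ ^ (-(l : ℤ)) * (g n * (u * ζ ^ l) ^ n)
        = g n * u ^ n * (ζ ^ (-(l : ℤ)) * (ζ ^ l) ^ n) := by rw [mul_pow]; ring
      _ = g n * u ^ n * (ζ ^ ((n : ℤ) - 1)) ^ l := by rw [h1]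
  have hfilter : ∀ n : ℕ,
      (∑ l ∈ Finset.range 3, (ζ ^ ((n : ℤ) - 1)) ^ l) = if n % 3 = 1 then 3 else 0 := by
    intro n
    set x : ℂ := ζ ^ ((n : ℤ) - 1) with hx
    have hx3 : x ^ 3 = 1 := by
      rw [hx, ← zpow_natCast (ζ ^ ((n : ℤ) - 1)) 3, ← zpow_mul]
      exact (hζ.zpow_eq_one_iff_dvd _).mpr ⟨(n : ℤ) - 1, by push_cast; ring⟩
    by_cases h : n % 3 = 1
    · have hx1 : x = 1 := by
        rw [hx]
        exact (hζ.zpow_eq_one_iff_dvd _).mpr (by omega)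
      simp [hx1, h]
    · have hx1 : x ≠ 1 := by
        intro hxe
        rw [hx] at hxe
        have := (hζ.zpow_eq_one_iff_dvd _).mp hxe
        omega
      rw [geom_sum_eq hx1, hx3]
      simp [h]
  have hswap : (∑ l ∈ Finset.range 3, ζ ^ (-(l : ℤ)) * ∑' n : ℕ, g n * (u * ζ ^ l) ^ n)
      = ∑' n : ℕ, g n * u ^ n * (if n % 3 = 1 then (3 : ℂ) else 0) := by
    have h1 : ∀ l ∈ Finset.range 3,
        Summable (fun n : ℕ => ζ ^ (-(l : ℤ)) * (g n * (u * ζ ^ l) ^ n)) :=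
      fun l _ => (hsuml l).mul_left _
    calc (∑ l ∈ Finset.range 3, ζ ^ (-(l : ℤ)) * ∑' n : ℕ, g n * (u * ζ ^ l) ^ n)
        = ∑ l ∈ Finset.range 3, ∑' n : ℕ, ζ ^ (-(l : ℤ)) * (g n * (u * ζ ^ l) ^ n) := by
          exact Finset.sum_congr rfl fun l _ => (tsum_mul_left).symm
      _ = ∑' n : ℕ, ∑ l ∈ Finset.range 3, ζ ^ (-(l : ℤ)) * (g n * (u * ζ ^ l) ^ n) :=
          (Summable.tsum_finsetSum h1).symm
      _ = ∑' n : ℕ, g n * u ^ n * (if n % 3 = 1 then (3 : ℂ) else 0) := by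
          apply tsum_congr
          intro n
          simp_rw [hterm n]
          rw [← Finset.mul_sum, hfilter n]
  rw [hswap, ← tsum_mul_left]
  have hinj : Function.Injective (fun m : ℕ => 3 * m + 1) := by
    intro a b h
    simp only at h
    omega
  have hrestrict := Function.Injective.tsum_eq (g := fun m : ℕ => 3 * m + 1) hinj
    (f := fun n : ℕ => w / 3 * (g n * u ^ n * (if n % 3 = 1 then (3 : ℂ) else 0)))
    (by
      intro n hn
      rcases Nat.lt_or_ge (n % 3) 3 with _ | h3
      · by_cases h : n % 3 = 1
        · exact ⟨n / 3, by simp only []; omega⟩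
        · exfalso
          apply hn
          simp [Function.mem_support, h] at *
      · omega)
  rw [← hrestrict]
  apply tsum_congr
  intro m
  have hmod : (3 * m + 1) % 3 = 1 := by omega
  rw [hmod]
  simp only [if_pos]
  have hpow : w * u ^ (3 * m + 1) = z ^ (2 * m + 1) := by
    have h1 : u ^ (3 * m + 1) = z ^ ((((3 * m + 1 : ℕ)) : ℂ) * ((2 : ℂ) / 3)) := by
      rw [hu, Complex.cpow_nat_mul]
    have h2 : w * z ^ ((((3 * m + 1 : ℕ)) : ℂ) * ((2 : ℂ) / 3))
        = z ^ ((1 : ℂ) / 3 + (((3 * m + 1 : ℕ)) : ℂ) * ((2 : ℂ) / 3)) := by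
      rw [hw, ← Complex.cpow_add _ _ hz0]
    have h3 : ((1 : ℂ) / 3 + (((3 * m + 1 : ℕ)) : ℂ) * ((2 : ℂ) / 3))
        = (((2 * m + 1 : ℕ)) : ℂ) := by push_cast; ring
    rw [h1, h2, h3, Complex.cpow_natCast]
  rw [← hpow]
  ring
end

section
/- Let t be an (m,a,b)-Collatz map with λ_r = a_r m ∈ ℕ and μ_r = a_r r + b_r ∈ ℕ₀, and generating functions f_k(z) = Σ_{n=0}^∞ t_k(n) z^n for |z| < 1. Then for all k ≥ 1, all z with 0 < |z| < 1, and any radius ρ with |z|^{1/‖a‖_∞} < ρ < 1, one has f_k(z) = Σ_{r=0}^{m−1} (z^r/(2πi)) ∮_{|u|=ρ} f_{k−1}(u) / (u^{μ_r − λ_r + 1}(u^{λ_r} − z^m)) du. -/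
open Real Filter

set_option maxHeartbeats 2000000

lemma circ_zpow {ρ : ℝ} (hρ : 0 < ρ) (j : ℤ) :
    (∮ u in C(0, ρ), u ^ j) = if j = -1 then 2 * π * Complex.I else 0 := by
  split_ifs with h
  · subst h
    have := circleIntegral.integral_sub_center_inv 0 (R := ρ) hρ.ne'
    simpa [zpow_neg_one] using this
  · simpa using circleIntegral.integral_sub_zpow_of_ne h 0 0 ρ

set_option maxHeartbeats 2000000 in
lemma key_integral {c : ℕ → ℂ} {Cb : ℝ} (hc : ∀ n, ‖c n‖ ≤ Cb * (n + 1))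
    {ρ : ℝ} (hρ0 : 0 < ρ) (hρ1 : ρ < 1) (w : ℂ) (lam mu : ℕ) (hlam : 0 < lam)
    (hw : ‖w‖ < ρ ^ lam) :
    HasSum (fun q : ℕ => (2 * π * Complex.I) * (c (mu + lam * q) * w ^ q))
      (∮ u in C(0, ρ), (∑' n, c n * u ^ n) *
        (u ^ ((mu : ℤ) - (lam : ℤ) + 1) * (u ^ lam - w))⁻¹) := by
  set σ : ℤ := (mu : ℤ) - (lam : ℤ) + 1 with hσ
  set J : ℕ × ℕ → ℤ := fun p => (p.1 : ℤ) - σ - (lam : ℤ) * (p.2 + 1) with hJ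
  have hρlam : (0:ℝ) < ρ ^ lam := pow_pos hρ0 lam
  have hCb : 0 ≤ Cb := by
    have := hc 0
    have h0 : (0:ℝ) ≤ ‖c 0‖ := norm_nonneg _
    nlinarith
  have hratio0 : 0 ≤ ‖w‖ / ρ ^ lam := div_nonneg (norm_nonneg w) hρlam.le
  have hratio1 : ‖w‖ / ρ ^ lam < 1 := (div_lt_one hρlam).2 hw
  -- summability of the coefficient bound
  have hsum1 : Summable (fun n : ℕ => Cb * (n + 1) * ρ ^ n) := by
    have h1 : Summable (fun n : ℕ => (n : ℝ) ^ 1 * ρ ^ n) :=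
      summable_pow_mul_geometric_of_norm_lt_one 1 (by rwa [Real.norm_eq_abs, abs_of_pos hρ0])
    have h2 : Summable (fun n : ℕ => ρ ^ n) :=
      summable_geometric_of_lt_one hρ0.le hρ1
    have := (h1.add h2).mul_left Cb
    refine this.congr fun n => by push_cast; ring
  have hrJ : ∀ p : ℕ × ℕ, ρ ^ (J p) =
      ρ ^ p.1 * ρ ^ (-σ - lam : ℤ) * ((ρ ^ lam)⁻¹) ^ p.2 := by
    intro p
    have h : J p = (p.1 : ℤ) + (-σ - lam) + (-(lam:ℤ)) * p.2 := by simp only [hJ]; ring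
    rw [h, zpow_add₀ hρ0.ne', zpow_add₀ hρ0.ne', zpow_natCast, zpow_mul]
    simp [zpow_neg, zpow_natCast]
  -- norm of each term on the circle
  have hnormG : ∀ (p : ℕ × ℕ) (u : ℂ), ‖u‖ = ρ →
      ‖c p.1 * w ^ p.2 * u ^ (J p)‖ =
        ‖c p.1‖ * ‖w‖ ^ p.2 * ρ ^ (J p) := by
    intro p u hu
    rw [norm_mul, norm_mul, norm_zpow, norm_pow]
    norm_num [hu]
  -- Step A: pointwise expansion on the circle
  have hstepA : ∀ u : ℂ, ‖u‖ = ρ →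
      HasSum (fun p : ℕ × ℕ => c p.1 * w ^ p.2 * u ^ (J p))
        ((∑' n, c n * u ^ n) * (u ^ σ * (u ^ lam - w))⁻¹) := by
    intro u hu
    have hu0 : u ≠ 0 := by
      intro h; rw [h, norm_zero] at hu; exact hρ0.ne hu
    have hulam : u ^ lam ≠ 0 := pow_ne_zero _ hu0
    have hun : ∀ n : ℕ, ‖c n * u ^ n‖ ≤ Cb * (n + 1) * ρ ^ n := by
      intro n
      rw [norm_mul, norm_pow, hu]
      exact mul_le_mul_of_nonneg_right (hc n) (pow_nonneg hρ0.le n)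
    have hs1 : Summable (fun n : ℕ => ‖c n * u ^ n‖) :=
      Summable.of_nonneg_of_le (fun n => norm_nonneg _) hun hsum1
    have h1 : HasSum (fun n : ℕ => c n * u ^ n) (∑' n, c n * u ^ n) :=
      hs1.of_norm.hasSum
    have hnr : ‖w * (u ^ lam)⁻¹‖ < 1 := by
      rw [norm_mul, norm_inv, norm_pow, hu,
        ← div_eq_mul_inv]
      exact hratio1
    have hg : HasSum (fun q : ℕ => (w * (u ^ lam)⁻¹) ^ q) (1 - w * (u ^ lam)⁻¹)⁻¹ :=
      hasSum_geometric_of_norm_lt_one hnr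
    have hfun : (fun q : ℕ => (w * (u ^ lam)⁻¹) ^ q * (u ^ lam)⁻¹)
        = fun q : ℕ => w ^ q * u ^ (-((lam:ℤ) * (q + 1))) := by
      funext q
      rw [mul_pow, inv_pow, ← pow_mul, mul_assoc]
      congr 1
      rw [← zpow_natCast u (lam * q), ← zpow_natCast u lam, ← zpow_neg, ← zpow_neg,
        ← zpow_add₀ hu0]
      congr 1
      push_cast
      ring
    have hv : (1 - w * (u ^ lam)⁻¹)⁻¹ * (u ^ lam)⁻¹ = (u ^ lam - w)⁻¹ := by
      rw [← mul_inv]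
      congr 1
      field_simp
    have h2 : HasSum (fun q : ℕ => w ^ q * u ^ (-((lam:ℤ) * (q + 1)))) ((u ^ lam - w)⁻¹) := by
      have h := hg.mul_right (u ^ lam)⁻¹
      rw [hv] at h
      exact hfun ▸ h
    have hs2 : Summable (fun q : ℕ => ‖w ^ q * u ^ (-((lam:ℤ) * (q + 1)))‖) := by
      have : ∀ q : ℕ, ‖w ^ q * u ^ (-((lam:ℤ) * (q + 1)))‖
          = (‖w‖ / ρ ^ lam) ^ q * (ρ ^ lam)⁻¹ := by
        intro q
        rw [norm_mul, norm_pow, norm_zpow, hu]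
        have hexp : ρ ^ (-((lam:ℤ) * (q + 1))) = ((ρ ^ lam)⁻¹) ^ (q + 1) := by
          rw [show (-((lam:ℤ) * (q + 1))) = (-(lam:ℤ)) * ((q + 1 : ℕ) : ℤ) by push_cast; ring,
            zpow_mul, zpow_neg, zpow_natCast, zpow_natCast]
        rw [hexp, div_pow, pow_succ, inv_pow]
        ring
      rw [funext this]
      exact ((summable_geometric_of_lt_one hratio0 hratio1).mul_right _)
    have hprod : Summable (fun p : ℕ × ℕ =>
        (c p.1 * u ^ p.1) * (w ^ p.2 * u ^ (-((lam:ℤ) * (p.2 + 1))))) :=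
      by apply summable_mul_of_summable_norm hs1 hs2
    have h3 := h1.mul h2 hprod
    have h4 := h3.mul_right (u ^ (-σ))
    have hterm : (fun p : ℕ × ℕ =>
        (c p.1 * u ^ p.1) * (w ^ p.2 * u ^ (-((lam:ℤ) * (p.2 + 1)))) * u ^ (-σ))
        = fun p : ℕ × ℕ => c p.1 * w ^ p.2 * u ^ (J p) := by
      funext p
      have hz : u ^ (J p) = u ^ (p.1:ℤ) * u ^ (-((lam:ℤ) * (p.2 + 1))) * u ^ (-σ) := by
        rw [← zpow_add₀ hu0, ← zpow_add₀ hu0]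
        congr 1
        simp only [hJ]
        ring
      rw [hz, zpow_natCast]
      ring
    have hval2 : (∑' n, c n * u ^ n) * (u ^ lam - w)⁻¹ * u ^ (-σ)
        = (∑' n, c n * u ^ n) * (u ^ σ * (u ^ lam - w))⁻¹ := by
      rw [mul_inv, zpow_neg]
      ring
    rw [hval2] at h4
    exact hterm ▸ h4
  -- Step B: swap integral and sum
  have hint : HasSum (fun p : ℕ × ℕ => ∮ u in C(0, ρ), c p.1 * w ^ p.2 * u ^ (J p))
      (∮ u in C(0, ρ), (∑' n, c n * u ^ n) * (u ^ σ * (u ^ lam - w))⁻¹) := by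
    have habs : ∀ θ : ℝ, ‖circleMap 0 ρ θ‖ = ρ := by
      intro θ; rw [norm_circleMap_zero, abs_of_pos hρ0]
    have hne : ∀ θ : ℝ, circleMap 0 ρ θ ≠ 0 := by
      intro θ h
      have := habs θ
      rw [h, norm_zero] at this
      exact hρ0.ne this
    simp only [circleIntegral]
    refine intervalIntegral.hasSum_integral_of_dominated_convergence
      (bound := fun p _ => ρ * (‖c p.1‖ * ‖w‖ ^ p.2 * ρ ^ (J p)))
      (fun p => ?_) (fun p => ?_) ?_ ?_ ?_
    · apply Continuous.aestronglyMeasurable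
      simp only [deriv_circleMap]
      exact ((continuous_circleMap 0 ρ).mul continuous_const).smul
        (continuous_const.mul
          ((continuous_circleMap 0 ρ).zpow₀ (J p) (fun θ => Or.inl (hne θ))))
    · refine Eventually.of_forall fun θ _ => ?_
      rw [norm_smul, deriv_circleMap, hnormG p _ (habs θ)]
      apply le_of_eq
      congr 1
      rw [norm_mul, habs θ]
      simp
    · refine Eventually.of_forall fun θ _ => ?_
      set K : ℝ := ρ ^ (-σ - lam : ℤ) with hK
      have hKpos : 0 < K := zpow_pos hρ0 _
      have hsp : Summable (fun p : ℕ × ℕ =>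
          (Cb * (p.1 + 1) * ρ ^ p.1) * ((‖w‖ / ρ ^ lam) ^ p.2)) :=
        Summable.mul_of_nonneg hsum1 (summable_geometric_of_lt_one hratio0 hratio1)
          (fun n => by positivity) (fun q => by positivity)
      refine Summable.of_nonneg_of_le (fun p => by positivity) (fun p => ?_)
        (hsp.mul_left (ρ * K))
      rw [hrJ p, div_pow]
      have h1 : ‖c p.1‖ ≤ Cb * (p.1 + 1) := hc p.1
      calc ρ * (‖c p.1‖ * ‖w‖ ^ p.2 * (ρ ^ p.1 * K * ((ρ ^ lam)⁻¹) ^ p.2))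
          = (ρ * K) * ((‖c p.1‖ * ρ ^ p.1) * (‖w‖ ^ p.2 * ((ρ ^ lam)⁻¹) ^ p.2)) := by
            ring
        _ ≤ (ρ * K) * ((Cb * (p.1 + 1) * ρ ^ p.1) *
              (‖w‖ ^ p.2 * ((ρ ^ lam)⁻¹) ^ p.2)) := by
            gcongr
        _ = (ρ * K) * (Cb * (p.1 + 1) * ρ ^ p.1 * (‖w‖ ^ p.2 / (ρ ^ lam) ^ p.2)) := by
            rw [div_eq_mul_inv, inv_pow]
    · exact intervalIntegrable_const
    · refine Eventually.of_forall fun θ _ => ?_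
      exact (hstepA _ (habs θ)).const_smul _
  -- value of each circle integral
  have hval : ∀ p : ℕ × ℕ, (∮ u in C(0, ρ), c p.1 * w ^ p.2 * u ^ (J p)) =
      if p.1 = mu + lam * p.2 then 2 * π * Complex.I * (c p.1 * w ^ p.2) else 0 := by
    intro p
    rw [circleIntegral.integral_const_mul, circ_zpow hρ0]
    have hiff : J p = -1 ↔ p.1 = mu + lam * p.2 := by
      simp only [hJ, hσ]
      constructor
      · intro h
        have h2 : (p.1 : ℤ) = (mu : ℤ) + (lam : ℤ) * p.2 := by linarith
        exact_mod_cast h2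
      · intro h
        have h2 : (p.1 : ℤ) = (mu : ℤ) + (lam : ℤ) * p.2 := by exact_mod_cast h
        linarith
    by_cases h : p.1 = mu + lam * p.2
    · rw [if_pos (hiff.2 h), if_pos h]; ring
    · rw [if_neg (fun hj => h (hiff.1 hj)), if_neg h, mul_zero]
  simp only [hval] at hint
  -- Step C: restrict to the diagonal support
  have hinj : Function.Injective (fun q : ℕ => ((mu + lam * q, q) : ℕ × ℕ)) := by
    intro q1 q2 h
    exact congrArg Prod.snd h
  have hzero : ∀ p : ℕ × ℕ, p ∉ Set.range (fun q : ℕ => ((mu + lam * q, q) : ℕ × ℕ)) →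
      (if p.1 = mu + lam * p.2 then 2 * π * Complex.I * (c p.1 * w ^ p.2) else 0) = 0 := by
    intro p hp
    rw [if_neg]
    intro h
    exact hp ⟨p.2, by simp [Prod.ext_iff, ← h]⟩
  have hfin := (Function.Injective.hasSum_iff hinj hzero).mpr hint
  have heq : (fun q : ℕ => 2 * π * Complex.I * (c (mu + lam * q) * w ^ q)) =
      ((fun p : ℕ × ℕ => if p.1 = mu + lam * p.2
          then 2 * π * Complex.I * (c p.1 * w ^ p.2) else 0) ∘ fun q => (mu + lam * q, q)) := by
    funext q
    simp [Function.comp]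
  rw [heq]
  exact hfin


/-- Contour-integral recursion for the generating functions `f_k` of an
`(m,a,b)`-Collatz dynamics:
`f_k(z) = Σ_r (z^r/(2πi)) ∮_{|u|=ρ} f_{k−1}(u) / (u^{μ_r−λ_r+1}(u^{λ_r}−z^m)) du`,
for `0 < |z| < 1` and any `|z|^{1/‖a‖_∞} < ρ < 1`. -/
theorem stmt12 (m : ℕ) (hm : 0 < m) (a b : Fin m → ℝ) (lam mu : Fin m → ℕ)
    (hlam : ∀ r, 0 < lam r ∧ a r * m = lam r)
    (hmu : ∀ r, a r * (r : ℕ) + b r = mu r)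
    (t : ℕ → ℕ)
    (ht : ∀ n : ℕ, (t n : ℝ) =
      a ⟨n % m, Nat.mod_lt n hm⟩ * n + b ⟨n % m, Nat.mod_lt n hm⟩)
    (A : ℝ) (hA : IsGreatest (Set.range fun r => |a r|) A)
    (k : ℕ) (hk : 1 ≤ k) (z : ℂ) (hz0 : z ≠ 0) (hz1 : ‖z‖ < 1)
    (ρ : ℝ) (hρ1 : ‖z‖ ^ A⁻¹ < ρ) (hρ2 : ρ < 1) :
    (∑' n : ℕ, (t^[k] n : ℂ) * z ^ n) =
      ∑ r : Fin m, (z ^ (r : ℕ) * (2 * π * Complex.I)⁻¹) *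
        ∮ u in C(0, ρ),
          (∑' n : ℕ, (t^[k - 1] n : ℂ) * u ^ n) *
            (u ^ ((mu r : ℤ) - (lam r : ℤ) + 1) * (u ^ (lam r) - z ^ m))⁻¹ := by
  haveI : NeZero m := ⟨hm.ne'⟩
  -- basic positivity facts
  have hA_ub : ∀ r, |a r| ≤ A := fun r => hA.2 ⟨r, rfl⟩
  have hapos : ∀ r, 0 < a r := by
    intro r
    have h1 := (hlam r).2
    have h2 : (0:ℝ) < lam r := by exact_mod_cast (hlam r).1
    have h3 : (0:ℝ) < m := by exact_mod_cast hm
    nlinarith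
  have hApos : 0 < A := lt_of_lt_of_le (hapos ⟨0, hm⟩)
    (le_trans (le_abs_self _) (hA_ub ⟨0, hm⟩))
  have hzabs : 0 < ‖z‖ := norm_pos_iff.mpr hz0
  have hρ0 : 0 < ρ := lt_trans (Real.rpow_pos_of_pos hzabs _) hρ1
  -- growth bound
  set B : ℝ := ∑ r : Fin m, |b r| with hB
  have hB0 : 0 ≤ B := Finset.sum_nonneg fun r _ => abs_nonneg _
  have hb_ub : ∀ r, |b r| ≤ B := fun r =>
    Finset.single_le_sum (fun i _ => abs_nonneg (b i)) (Finset.mem_univ r)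
  set D : ℝ := A + B + 1 with hD
  have hD1 : 1 ≤ D := by nlinarith
  have htb : ∀ n : ℕ, (t n : ℝ) + 1 ≤ D * (n + 1) := by
    intro n
    set r : Fin m := ⟨n % m, Nat.mod_lt n hm⟩
    have h1 := ht n
    have h2 : a r ≤ A := le_trans (le_abs_self _) (hA_ub r)
    have h3 : b r ≤ B := le_trans (le_abs_self _) (hb_ub r)
    have h4 : (0:ℝ) ≤ n := Nat.cast_nonneg n
    have h5 : 0 < a r := hapos r
    nlinarith
  have growth : ∀ j n : ℕ, ((t^[j] n : ℕ) : ℝ) + 1 ≤ D ^ j * (n + 1) := by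
    intro j
    induction j with
    | zero => intro n; simp
    | succ j ih =>
      intro n
      rw [Function.iterate_succ_apply]
      calc ((t^[j] (t n) : ℕ) : ℝ) + 1 ≤ D ^ j * (t n + 1) := ih (t n)
        _ ≤ D ^ j * (D * (n + 1)) := by
            have : (0:ℝ) ≤ D ^ j := pow_nonneg (by linarith) j
            exact mul_le_mul_of_nonneg_left (htb n) this
        _ = D ^ (j + 1) * (n + 1) := by ring
  have hcnorm : ∀ j n : ℕ, ‖((t^[j] n : ℕ) : ℂ)‖ ≤ D ^ j * (n + 1) := by
    intro j n
    rw [Complex.norm_natCast]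
    have := growth j n
    linarith
  -- radius condition
  have hw : ∀ r : Fin m, ‖z ^ m‖ < ρ ^ lam r := by
    intro r
    rw [norm_pow]
    have hlt : ‖z‖ ^ m ≤ (‖z‖ ^ A⁻¹) ^ lam r := by
      rw [← Real.rpow_natCast ‖z‖ m, ← Real.rpow_natCast (‖z‖ ^ A⁻¹),
        ← Real.rpow_mul hzabs.le]
      apply Real.rpow_le_rpow_of_exponent_ge hzabs hz1.le
      rw [← (hlam r).2]
      rw [inv_mul_le_iff₀ hApos]
      have : a r ≤ A := le_trans (le_abs_self _) (hA_ub r)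
      have h3 : (0:ℝ) ≤ m := Nat.cast_nonneg m
      nlinarith
    calc ‖z‖ ^ m ≤ (‖z‖ ^ A⁻¹) ^ lam r := hlt
      _ < ρ ^ lam r := by
          apply pow_lt_pow_left₀ hρ1 (Real.rpow_nonneg hzabs.le _)
          exact (hlam r).1.ne'
  -- the key contour identity for each residue class
  have hkey : ∀ r : Fin m,
      HasSum (fun q : ℕ => (2 * π * Complex.I) *
          (((t^[k-1] (mu r + lam r * q) : ℕ) : ℂ) * (z ^ m) ^ q))
        (∮ u in C(0, ρ), (∑' n : ℕ, (t^[k - 1] n : ℂ) * u ^ n) *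
          (u ^ ((mu r : ℤ) - (lam r : ℤ) + 1) * (u ^ (lam r) - z ^ m))⁻¹) :=
    fun r => key_integral (hcnorm (k-1)) hρ0 hρ2 (z ^ m) (lam r) (mu r) (hlam r).1 (hw r)
  -- arithmetic of the Collatz step
  have hstep : ∀ (q : ℕ) (r : Fin m), t (q * m + r) = mu r + lam r * q := by
    intro q r
    have hmod : (q * m + (r : ℕ)) % m = (r : ℕ) := by
      rw [mul_comm q m, Nat.mul_add_mod, Nat.mod_eq_of_lt r.isLt]
    have hidx : (⟨(q * m + (r : ℕ)) % m, Nat.mod_lt _ hm⟩ : Fin m) = r := Fin.ext hmod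
    have h1 := ht (q * m + (r : ℕ))
    rw [hidx] at h1
    have h2 : (t (q * m + (r : ℕ)) : ℝ) = ((mu r + lam r * q : ℕ) : ℝ) := by
      rw [h1]
      push_cast
      rw [← (hlam r).2, ← hmu r]
      ring
    exact_mod_cast h2
  have hiter : ∀ (q : ℕ) (r : Fin m), t^[k] (q * m + r) = t^[k-1] (mu r + lam r * q) := by
    intro q r
    conv_lhs => rw [show k = (k-1) + 1 from (Nat.succ_pred_eq_of_pos hk).symm]
    rw [Function.iterate_succ_apply, hstep]
  -- summability of the generating series
  have hsumf : Summable (fun n : ℕ => (t^[k] n : ℂ) * z ^ n) := by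
    apply Summable.of_norm
    have hbnd : ∀ n : ℕ, ‖(t^[k] n : ℂ) * z ^ n‖ ≤ D ^ k * (n + 1) * ‖z‖ ^ n := by
      intro n
      rw [norm_mul, norm_pow]
      exact mul_le_mul_of_nonneg_right (hcnorm k n) (pow_nonneg hzabs.le n)
    refine Summable.of_nonneg_of_le (fun n => norm_nonneg _) hbnd ?_
    have h1 : Summable (fun n : ℕ => (n : ℝ) ^ 1 * ‖z‖ ^ n) :=
      summable_pow_mul_geometric_of_norm_lt_one 1 (by rwa [Real.norm_eq_abs, abs_of_pos hzabs])
    have h2 : Summable (fun n : ℕ => ‖z‖ ^ n) :=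
      summable_geometric_of_lt_one hzabs.le hz1
    refine ((h1.add h2).mul_left (D ^ k)).congr fun n => by push_cast; ring
  -- reindex the left-hand side
  set e : Fin m × ℕ ≃ ℕ :=
    (Equiv.prodComm (Fin m) ℕ).trans (Nat.divModEquiv m).symm with he
  have hecomp : ∀ p : Fin m × ℕ, e p = p.2 * m + (p.1 : ℕ) := by
    intro p; simp [he, Nat.divModEquiv]
  set f : ℕ → ℂ := fun n => (t^[k] n : ℂ) * z ^ n with hf
  have hLHS : (∑' n : ℕ, f n) = ∑ r : Fin m, z ^ (r : ℕ) *
      ∑' q : ℕ, ((t^[k-1] (mu r + lam r * q) : ℕ) : ℂ) * (z ^ m) ^ q := by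
    have h1 : (∑' p : Fin m × ℕ, f (e p)) = ∑' n, f n := Equiv.tsum_eq e f
    have hsum2 : Summable (fun p : Fin m × ℕ => f (e p)) := e.summable_iff.2 hsumf
    rw [← h1, Summable.tsum_prod hsum2, tsum_fintype]
    apply Finset.sum_congr rfl
    intro r _
    rw [← tsum_mul_left]
    apply tsum_congr
    intro q
    rw [hecomp (r, q)]
    simp only [hf]
    rw [hiter q r, pow_add, pow_mul]
    ring
  rw [hLHS]
  -- identify the right-hand side
  apply Finset.sum_congr rfl
  intro r _
  have h2pi : (2 * (π:ℂ) * Complex.I) ≠ 0 := by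
    simp [Real.pi_ne_zero, Complex.I_ne_zero, Complex.ofReal_ne_zero]
  have hr := (hkey r).mul_left (2 * (π:ℂ) * Complex.I)⁻¹
  have hr2 : HasSum (fun q : ℕ => ((t^[k-1] (mu r + lam r * q) : ℕ) : ℂ) * (z ^ m) ^ q)
      ((2 * (π:ℂ) * Complex.I)⁻¹ *
        ∮ u in C(0, ρ), (∑' n : ℕ, (t^[k - 1] n : ℂ) * u ^ n) *
          (u ^ ((mu r : ℤ) - (lam r : ℤ) + 1) * (u ^ (lam r) - z ^ m))⁻¹) := by
    have heq : (fun q : ℕ => (2 * (π:ℂ) * Complex.I)⁻¹ * ((2 * π * Complex.I) *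
        (((t^[k-1] (mu r + lam r * q) : ℕ) : ℂ) * (z ^ m) ^ q)))
        = fun q : ℕ => ((t^[k-1] (mu r + lam r * q) : ℕ) : ℂ) * (z ^ m) ^ q := by
      funext q
      rw [inv_mul_cancel_left₀ h2pi]
    rw [← heq]
    exact hr
  rw [hr2.tsum_eq]
  ring
end

section
/- Let t be an (m,a,b)-Collatz map and f_k(z) = Σ_{n=0}^∞ t_k(n) z^n for |z| < 1. With φ_{r,l}(z) = z^{m/λ_r} e^{2πi l/λ_r} and the unique partial-fraction coefficients σ_{r,l}(z), τ_{r,l}(z) of 1/(u^{μ_r−λ_r+1}(u^{λ_r}−z^m)), the recurrence f_k(z) = Σ_{r=0}^{m−1} z^r ( Σ_{l=0}^{μ_r−λ_r} σ_{r,l}(z) t_{k−1}(l) + Σ_{l=0}^{λ_r−1} τ_{r,l}(z) f_{k−1}(φ_{r,l}(z)) ) holds for all 0 < |z| < 1 and k ≥ 1, with initial condition f_0(z) = z/(1−z)². -/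
open Real

lemma summable_bound_geom {e : ℕ → ℂ} {M : ℝ} (hM : ∀ n, ‖e n‖ ≤ M)
    {w : ℂ} (hw : ‖w‖ < 1) : Summable (fun n => e n * w ^ n) := by
  apply Summable.of_norm_bounded (g := fun n => M * ‖w‖ ^ n)
  · exact (summable_geometric_of_lt_one (norm_nonneg w) hw).mul_left M
  · intro n
    rw [norm_mul, norm_pow]
    exact mul_le_mul_of_nonneg_right (hM n) (by positivity)

lemma coeff_zero_eq (e : ℕ → ℂ) (M : ℝ) (hM : ∀ n, ‖e n‖ ≤ M)
    (H : ∀ w : ℂ, w ≠ 0 → ‖w‖ < 1 → ∑' n, e n * w ^ n = 0) :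
    e 0 = 0 := by
  have hM0 : 0 ≤ M := le_trans (norm_nonneg _) (hM 0)
  have key : ∀ x : ℝ, 0 < x → x < 1/2 → ‖e 0‖ ≤ 2 * M * x := by
    intro x hx0 hx2
    have hxw : ‖(x : ℂ)‖ < 1 := by
      rw [Complex.norm_real, Real.norm_eq_abs, abs_of_pos hx0]; linarith
    have hs : Summable (fun n => e n * (x:ℂ) ^ n) := summable_bound_geom hM hxw
    have h0 := H (x : ℂ) (by exact_mod_cast hx0.ne') hxw
    have hsplit : (∑' n, e n * (x:ℂ) ^ n) = e 0 + ∑' n, e (n+1) * (x:ℂ) ^ (n+1) := by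
      simpa using (Summable.tsum_eq_zero_add hs)
    have he0 : e 0 = -∑' n, e (n+1) * (x:ℂ) ^ (n+1) := by
      rw [h0] at hsplit; linear_combination -hsplit
    rw [he0, norm_neg]
    calc ‖∑' n, e (n+1) * (x:ℂ) ^ (n+1)‖
        ≤ ∑' n, ‖e (n+1) * (x:ℂ) ^ (n+1)‖ := by
          apply norm_tsum_le_tsum_norm
          exact ((summable_bound_geom hM hxw).comp_injective (add_left_injective 1)).norm
      _ ≤ ∑' n : ℕ, M * x ^ (n+1) := by
          apply Summable.tsum_le_tsum
          · intro n
            rw [norm_mul, norm_pow, Complex.norm_real, Real.norm_eq_abs, abs_of_pos hx0]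
            exact mul_le_mul_of_nonneg_right (hM _) (by positivity)
          · exact ((summable_bound_geom hM hxw).comp_injective (add_left_injective 1)).norm.congr
              (by intro n; simp [abs_of_pos hx0])
          · exact ((summable_geometric_of_lt_one hx0.le (by linarith)).mul_left M).comp_injective
              (add_left_injective 1)
      _ = M * (x / (1 - x)) := by
          rw [tsum_mul_left]
          congr 1
          have h : ∀ n : ℕ, x ^ (n+1) = x * x ^ n := fun n => by ring
          simp_rw [h]
          rw [tsum_mul_left, tsum_geometric_of_lt_one hx0.le (by linarith)]
          rw [div_eq_mul_inv]
      _ ≤ 2 * M * x := by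
          rw [mul_comm 2 M, mul_assoc]
          apply mul_le_mul_of_nonneg_left _ hM0
          rw [div_le_iff₀ (by linarith)]
          nlinarith
  by_contra hne
  have habs : 0 < ‖e 0‖ := norm_pos_iff.mpr hne
  obtain ⟨x, hx0, hx2, hxlt⟩ : ∃ x : ℝ, 0 < x ∧ x < 1/2 ∧ 2 * M * x < ‖e 0‖ := by
    refine ⟨min (1/4) (‖e 0‖ / (4 * M + 1)), by positivity, ?_, ?_⟩
    · calc min (1/4) (‖e 0‖ / (4 * M + 1)) ≤ 1/4 := min_le_left _ _
        _ < 1/2 := by norm_num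
    · calc 2 * M * min (1/4) (‖e 0‖ / (4 * M + 1))
          ≤ 2 * M * (‖e 0‖ / (4 * M + 1)) := by
            apply mul_le_mul_of_nonneg_left (min_le_right _ _) (by positivity)
        _ < ‖e 0‖ := by
            have h1 : (0:ℝ) < 4*M+1 := by linarith
            rw [← mul_div_assoc, div_lt_iff₀ h1]
            nlinarith
  exact absurd (key x hx0 hx2) (not_le.mpr hxlt)

lemma coeff_unique : ∀ (n : ℕ) (e : ℕ → ℂ) (M : ℝ), (∀ j, ‖e j‖ ≤ M) →
    (∀ w : ℂ, w ≠ 0 → ‖w‖ < 1 → ∑' j, e j * w ^ j = 0) → e n = 0 := by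
  intro n
  induction n with
  | zero => intro e M hM H; exact coeff_zero_eq e M hM H
  | succ n ih =>
    intro e M hM H
    have h0 : e 0 = 0 := coeff_zero_eq e M hM H
    refine ih (fun j => e (j+1)) M (fun j => hM _) ?_
    intro w hw0 hw1
    have hs : Summable (fun j => e j * w ^ j) := summable_bound_geom hM hw1
    have hsplit := Summable.tsum_eq_zero_add hs
    rw [H w hw0 hw1, h0] at hsplit
    have : (∑' j, e (j+1) * w ^ j) * w = 0 := by
      rw [← tsum_mul_right]
      simp only [mul_assoc, ← pow_succ]
      linear_combination -hsplit
    rcases mul_eq_zero.mp this with h | h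
    · exact h
    · exact absurd h hw0


section Btest
variable (lam mu : ℕ) (Z : ℂ) (φ σ τ : ℕ → ℂ)

noncomputable def cc (n : ℕ) : ℂ :=
  if mu ≤ n ∧ lam ∣ (n - mu) then Z ^ ((n - mu)/lam) else 0

noncomputable def dd (n : ℕ) : ℂ :=
  (if n < mu + 1 - lam then σ n else 0) + ∑ l ∈ Finset.range lam, τ l * φ l ^ n

lemma keyB (hlam : 0 < lam) (hZ1 : ‖Z‖ < 1)
    (hφ1 : ∀ l < lam, ‖φ l‖ < 1)
    (hdec : ∀ u : ℂ, u ≠ 0 → (∀ l < lam, u ≠ φ l) →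
      (u ^ ((mu:ℤ) - (lam:ℤ) + 1) * (u ^ lam - Z))⁻¹ =
        (∑ l ∈ Finset.range (mu + 1 - lam), σ l / u ^ (l+1)) +
        ∑ l ∈ Finset.range lam, τ l / (u - φ l)) :
    ∀ n, cc lam mu Z n = dd lam mu φ σ τ n := by
  -- bound for c
  have hZabs : ∀ j : ℕ, ‖Z ^ j‖ ≤ 1 := fun j => by
    rw [norm_pow]; exact pow_le_one₀ (norm_nonneg _) hZ1.le
  set S := ∑ l ∈ Finset.range (mu + 1 - lam), ‖σ l‖ with hS
  set T := ∑ l ∈ Finset.range lam, ‖τ l‖ with hT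
  have hSnn : 0 ≤ S := Finset.sum_nonneg fun _ _ => norm_nonneg _
  have hc_bd : ∀ n, ‖cc lam mu Z n‖ ≤ 1 := by
    intro n; unfold cc; split_ifs
    · exact hZabs _
    · simp
  have hd_bd : ∀ n, ‖dd lam mu φ σ τ n‖ ≤ S + T := by
    intro n; unfold dd
    refine le_trans (norm_add_le _ _) (add_le_add ?_ ?_)
    · split_ifs with h
      · exact Finset.single_le_sum (f := fun l => ‖σ l‖)
          (fun _ _ => norm_nonneg _) (Finset.mem_range.mpr h)
      · simp [hSnn]
    · calc ‖∑ l ∈ Finset.range lam, τ l * φ l ^ n‖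
          ≤ ∑ l ∈ Finset.range lam, ‖τ l * φ l ^ n‖ := by
            simpa using
              norm_sum_le (Finset.range lam) (fun l => τ l * φ l ^ n)
        _ ≤ T := by
            apply Finset.sum_le_sum
            intro l hl
            rw [norm_mul, norm_pow]
            calc ‖τ l‖ * ‖φ l‖ ^ n
                ≤ ‖τ l‖ * 1 :=
                  mul_le_mul_of_nonneg_left
                    (pow_le_one₀ (norm_nonneg _)
                      (hφ1 l (Finset.mem_range.mp hl)).le)
                    (norm_nonneg _)
              _ = ‖τ l‖ := mul_one _
  -- helper
  have one_sub_ne : ∀ x : ℂ, ‖x‖ < 1 → (1 : ℂ) - x ≠ 0 := by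
    intro x hx h
    rw [sub_eq_zero] at h
    rw [← h] at hx
    simp at hx
  -- the functional identity on the punctured disk
  have H : ∀ w : ℂ, w ≠ 0 → ‖w‖ < 1 →
      ∑' n, (cc lam mu Z n - dd lam mu φ σ τ n) * w ^ n = 0 := by
    intro w hw0 hw1
    have hZw : ‖Z * w ^ lam‖ < 1 := by
      rw [norm_mul, norm_pow]
      calc ‖Z‖ * ‖w‖ ^ lam ≤ ‖Z‖ * 1 :=
            mul_le_mul_of_nonneg_left (pow_le_one₀ (norm_nonneg _) hw1.le)
              (norm_nonneg _)
        _ = ‖Z‖ := mul_one _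
        _ < 1 := hZ1
    have hD : (1 : ℂ) - Z * w ^ lam ≠ 0 := one_sub_ne _ hZw
    have hφw : ∀ l < lam, ‖φ l * w‖ < 1 := by
      intro l hl
      rw [norm_mul]
      have h1 := hφ1 l hl
      have h2 := norm_nonneg (φ l)
      have h3 := norm_nonneg w
      nlinarith
    -- closed form for the c-series
    have hcw : ∑' n, cc lam mu Z n * w ^ n = w ^ mu * (1 - Z * w ^ lam)⁻¹ := by
      have hi : Function.Injective (fun j : ℕ => mu + lam * j) := by
        intro x y h
        simp only at h
        exact Nat.eq_of_mul_eq_mul_left hlam (by omega)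
      have hsupp : Function.support (fun n => cc lam mu Z n * w ^ n) ⊆
          Set.range (fun j : ℕ => mu + lam * j) := by
        intro n hn
        have hcn : cc lam mu Z n ≠ 0 := by
          intro h; apply hn; simp [h]
        unfold cc at hcn
        split_ifs at hcn with h
        · obtain ⟨hmu, hdvd⟩ := h
          exact ⟨(n - mu)/lam, by simp [Nat.mul_div_cancel' hdvd, Nat.add_sub_cancel' hmu]⟩
        · exact absurd rfl hcn
      have := Function.Injective.tsum_eq hi hsupp
      rw [← this]
      have heq : ∀ j : ℕ, cc lam mu Z (mu + lam * j) * w ^ (mu + lam * j) =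
          w ^ mu * (Z * w ^ lam) ^ j := by
        intro j
        have hcv : cc lam mu Z (mu + lam * j) = Z ^ j := by
          unfold cc
          rw [if_pos ⟨Nat.le_add_right _ _, by simp⟩]
          congr 1
          simp [Nat.mul_div_cancel_left _ hlam]
        rw [hcv, pow_add, pow_mul, mul_pow]
        ring
      rw [tsum_congr heq, tsum_mul_left, tsum_geometric_of_norm_lt_one (by
        exact hZw)]
    -- closed form for the d-series
    have hdw : ∑' n, dd lam mu φ σ τ n * w ^ n =
        (∑ l ∈ Finset.range (mu + 1 - lam), σ l * w ^ l) +
          ∑ l ∈ Finset.range lam, τ l * (1 - φ l * w)⁻¹ := by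
      unfold dd
      have hs1 : Summable (fun n => (if n < mu + 1 - lam then σ n else 0) * w ^ n) := by
        apply summable_of_finite_support
        apply Set.Finite.subset (Set.finite_Iio (mu + 1 - lam))
        intro n hn
        simp only [Function.mem_support] at hn
        by_contra hlt
        simp only [Set.mem_Iio, not_lt] at hlt
        exact hn (by rw [if_neg (by omega)]; ring)
      have hs2 : ∀ l ∈ Finset.range lam, Summable (fun n => τ l * φ l ^ n * w ^ n) := by
        intro l hl
        have h : ∀ n : ℕ, τ l * φ l ^ n * w ^ n = τ l * (φ l * w) ^ n := by
          intro n; rw [mul_pow]; ring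
        rw [summable_congr h]
        apply Summable.mul_left
        apply summable_geometric_of_norm_lt_one
        exact hφw l (Finset.mem_range.mp hl)
      have hs2' : Summable (fun n => (∑ l ∈ Finset.range lam, τ l * φ l ^ n) * w ^ n) := by
        have : ∀ n : ℕ, (∑ l ∈ Finset.range lam, τ l * φ l ^ n) * w ^ n =
            ∑ l ∈ Finset.range lam, τ l * φ l ^ n * w ^ n := by
          intro n; rw [Finset.sum_mul]
        rw [summable_congr this]
        exact summable_sum (fun l hl => hs2 l hl)
      have hsplit : ∀ n : ℕ,
          ((if n < mu + 1 - lam then σ n else 0) + ∑ l ∈ Finset.range lam, τ l * φ l ^ n) * w ^ n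
          = (if n < mu + 1 - lam then σ n else 0) * w ^ n +
            ∑ l ∈ Finset.range lam, τ l * φ l ^ n * w ^ n := by
        intro n; rw [add_mul, Finset.sum_mul]
      rw [tsum_congr hsplit, Summable.tsum_add hs1 (by
        have : ∀ n : ℕ, (∑ l ∈ Finset.range lam, τ l * φ l ^ n * w ^ n) =
            (∑ l ∈ Finset.range lam, τ l * φ l ^ n) * w ^ n := by
          intro n; rw [Finset.sum_mul]
        rw [summable_congr this]; exact hs2')]
      congr 1
      · rw [tsum_eq_sum (s := Finset.range (mu + 1 - lam)) (by
          intro n hn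
          rw [if_neg (by simpa using hn)]; ring)]
        apply Finset.sum_congr rfl
        intro n hn
        rw [if_pos (Finset.mem_range.mp hn)]
      · rw [Summable.tsum_finsetSum hs2]
        apply Finset.sum_congr rfl
        intro l hl
        have : ∀ n : ℕ, τ l * φ l ^ n * w ^ n = τ l * (φ l * w) ^ n := by
          intro n; rw [mul_pow]; ring
        rw [tsum_congr this, tsum_mul_left, tsum_geometric_of_norm_lt_one (by
          exact hφw l (Finset.mem_range.mp hl))]
    -- use hdec at u = w⁻¹ to equate the closed forms
    have hwinv0 : (w⁻¹ : ℂ) ≠ 0 := inv_ne_zero hw0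
    have hwinvφ : ∀ l < lam, (w⁻¹ : ℂ) ≠ φ l := by
      intro l hl h
      have h1 : ‖w⁻¹‖ < 1 := by rw [h]; exact hφ1 l hl
      rw [norm_inv] at h1
      have h2 : 0 < ‖w‖ := norm_pos_iff.mpr hw0
      have := (inv_lt_one_iff₀.mp h1)
      rcases this with h | h
      · exact absurd h (not_le.mpr h2)
      · linarith
    have h5 := hdec w⁻¹ hwinv0 hwinvφ
    have hZw' : ‖Z * w ^ lam‖ < 1 := hZw
    -- transform LHS of h5
    have hA : ((w⁻¹ : ℂ) ^ ((mu:ℤ) - (lam:ℤ) + 1) * ((w⁻¹) ^ lam - Z))⁻¹ =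
        w ^ (mu + 1) * (1 - Z * w ^ lam)⁻¹ := by
      have h1 : ((w⁻¹ : ℂ)) ^ lam - Z = (w ^ lam)⁻¹ * (1 - Z * w ^ lam) := by
        rw [inv_pow]
        field_simp
      have h2 : ((w⁻¹ : ℂ)) ^ ((mu:ℤ) - (lam:ℤ) + 1) = (w ^ ((mu:ℤ) - (lam:ℤ) + 1))⁻¹ := by
        rw [inv_zpow]
      rw [h1, h2, mul_inv, mul_inv, inv_inv, inv_inv]
      have h3 : (w : ℂ) ^ ((mu:ℤ) - (lam:ℤ) + 1) * w ^ lam = w ^ (mu + 1) := by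
        rw [← zpow_natCast w lam, ← zpow_add₀ hw0, ← zpow_natCast w (mu + 1)]
        congr 1
        push_cast
        ring
      rw [← mul_assoc, h3]
    -- transform RHS of h5
    have hB1 : ∀ l : ℕ, σ l / (w⁻¹ : ℂ) ^ (l+1) = σ l * w ^ l * w := by
      intro l
      rw [inv_pow, div_eq_mul_inv, inv_inv, pow_succ]
      ring
    have hB2 : ∀ l < lam, τ l / ((w⁻¹ : ℂ) - φ l) = τ l * (1 - φ l * w)⁻¹ * w := by
      intro l hl
      have hne : (1 : ℂ) - φ l * w ≠ 0 := one_sub_ne _ (hφw l hl)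
      have h1 : (w⁻¹ : ℂ) - φ l = w⁻¹ * (1 - φ l * w) := by
        field_simp
      rw [h1, div_eq_mul_inv, mul_inv, inv_inv]
      ring
    rw [hA] at h5
    have h6 : w ^ (mu + 1) * (1 - Z * w ^ lam)⁻¹ =
        ((∑ l ∈ Finset.range (mu + 1 - lam), σ l * w ^ l) +
          ∑ l ∈ Finset.range lam, τ l * (1 - φ l * w)⁻¹) * w := by
      rw [h5, add_mul, Finset.sum_mul, Finset.sum_mul]
      congr 1
      · exact Finset.sum_congr rfl (fun l _ => hB1 l)
      · exact Finset.sum_congr rfl (fun l hl => hB2 l (Finset.mem_range.mp hl))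
    -- conclude: c-series equals d-series
    have hsubsum : ∀ n : ℕ, (cc lam mu Z n - dd lam mu φ σ τ n) * w ^ n =
        cc lam mu Z n * w ^ n - dd lam mu φ σ τ n * w ^ n := fun n => by ring
    rw [tsum_congr hsubsum,
      Summable.tsum_sub (summable_bound_geom hc_bd hw1) (summable_bound_geom hd_bd hw1),
      hcw, hdw, sub_eq_zero]
    apply mul_right_cancel₀ hw0
    rw [← h6, pow_succ]
    ring
  -- apply uniqueness of coefficients
  intro n
  have := coeff_unique n (fun j => cc lam mu Z j - dd lam mu φ σ τ j) (1 + (S + T))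
    (fun j => by
      have h := norm_sub_le (cc lam mu Z j) (dd lam mu φ σ τ j)
      exact le_trans h (add_le_add (hc_bd j) (hd_bd j))) H
  exact sub_eq_zero.mp this
end Btest

lemma summable_poly_geom (g : ℕ → ℂ) (C : ℝ) (hg : ∀ n, ‖g n‖ ≤ C * (n+1))
    (x : ℂ) (hx : ‖x‖ < 1) : Summable (fun n => g n * x ^ n) := by
  apply Summable.of_norm_bounded (g := fun n : ℕ => C * ((n+1) * ‖x‖ ^ n))
  · apply Summable.mul_left
    have h1 : Summable (fun n : ℕ => (n : ℝ) * ‖x‖ ^ n) := by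
      have := summable_pow_mul_geometric_of_norm_lt_one (R := ℝ) 1 (r := ‖x‖)
        (by rwa [Real.norm_eq_abs, abs_of_nonneg (norm_nonneg _)])
      simpa using this
    have h2 : Summable (fun n : ℕ => ‖x‖ ^ n) :=
      summable_geometric_of_lt_one (norm_nonneg _) hx
    have := h1.add h2
    apply this.congr
    intro n; ring
  · intro n
    rw [norm_mul, norm_pow]
    calc ‖g n‖ * ‖x‖ ^ n ≤ (C * (n+1)) * ‖x‖ ^ n :=
          mul_le_mul_of_nonneg_right (hg n) (by positivity)
      _ = C * ((n+1) * ‖x‖ ^ n) := by ring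

lemma keyC (lam mu : ℕ) (Z : ℂ) (φ σ τ : ℕ → ℂ) (hlam : 0 < lam)
    (hZ1 : ‖Z‖ < 1)
    (hφ1 : ∀ l < lam, ‖φ l‖ < 1)
    (hdec : ∀ u : ℂ, u ≠ 0 → (∀ l < lam, u ≠ φ l) →
      (u ^ ((mu:ℤ) - (lam:ℤ) + 1) * (u ^ lam - Z))⁻¹ =
        (∑ l ∈ Finset.range (mu + 1 - lam), σ l / u ^ (l+1)) +
        ∑ l ∈ Finset.range lam, τ l / (u - φ l))
    (g : ℕ → ℂ) (C : ℝ) (hg : ∀ n, ‖g n‖ ≤ C * (n+1)) :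
    ∑' j : ℕ, g (mu + lam * j) * Z ^ j =
      (∑ l ∈ Finset.range (mu + 1 - lam), σ l * g l) +
        ∑ l ∈ Finset.range lam, τ l * ∑' n : ℕ, g n * φ l ^ n := by
  have hcd := keyB lam mu Z φ σ τ hlam hZ1 hφ1 hdec
  have hi : Function.Injective (fun j : ℕ => mu + lam * j) := by
    intro x y h
    simp only at h
    exact Nat.eq_of_mul_eq_mul_left hlam (by omega)
  have hsupp : Function.support (fun n => g n * cc lam mu Z n) ⊆
      Set.range (fun j : ℕ => mu + lam * j) := by
    intro n hn
    have hcn : cc lam mu Z n ≠ 0 := by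
      intro h; apply hn; simp [h]
    unfold cc at hcn
    split_ifs at hcn with h
    · obtain ⟨hmu, hdvd⟩ := h
      exact ⟨(n - mu)/lam, by simp [Nat.mul_div_cancel' hdvd, Nat.add_sub_cancel' hmu]⟩
    · exact absurd rfl hcn
  have hccval : ∀ j : ℕ, cc lam mu Z (mu + lam * j) = Z ^ j := by
    intro j
    unfold cc
    rw [if_pos ⟨Nat.le_add_right _ _, by simp⟩]
    congr 1
    simp [Nat.mul_div_cancel_left _ hlam]
  have step1 : ∑' j : ℕ, g (mu + lam * j) * Z ^ j = ∑' n : ℕ, g n * cc lam mu Z n := by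
    rw [← Function.Injective.tsum_eq hi hsupp]
    exact tsum_congr fun j => by rw [hccval j]
  rw [step1, tsum_congr (fun n => by rw [hcd n])]
  unfold dd
  have hsplit : ∀ n : ℕ,
      g n * ((if n < mu + 1 - lam then σ n else 0) + ∑ l ∈ Finset.range lam, τ l * φ l ^ n)
      = g n * (if n < mu + 1 - lam then σ n else 0) +
        ∑ l ∈ Finset.range lam, τ l * (g n * φ l ^ n) := by
    intro n
    rw [mul_add, Finset.mul_sum]
    congr 1
    exact Finset.sum_congr rfl fun l _ => by ring
  have hs1 : Summable (fun n => g n * (if n < mu + 1 - lam then σ n else 0)) := by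
    apply summable_of_finite_support
    apply Set.Finite.subset (Set.finite_Iio (mu + 1 - lam))
    intro n hn
    simp only [Function.mem_support] at hn
    by_contra hlt
    simp only [Set.mem_Iio, not_lt] at hlt
    exact hn (by rw [if_neg (by omega)]; ring)
  have hs2 : ∀ l ∈ Finset.range lam, Summable (fun n => τ l * (g n * φ l ^ n)) := by
    intro l hl
    exact (summable_poly_geom g C hg (φ l) (hφ1 l (Finset.mem_range.mp hl))).mul_left (τ l)
  rw [tsum_congr hsplit, Summable.tsum_add hs1 (summable_sum hs2)]
  congr 1
  · rw [tsum_eq_sum (s := Finset.range (mu + 1 - lam)) (by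
      intro n hn
      rw [if_neg (by simpa using hn)]; ring)]
    apply Finset.sum_congr rfl
    intro n hn
    rw [if_pos (Finset.mem_range.mp hn)]
    ring
  · rw [Summable.tsum_finsetSum hs2]
    apply Finset.sum_congr rfl
    intro l hl
    rw [tsum_mul_left]

lemma growth_bound (m : ℕ) (hm : 0 < m) (a b : Fin m → ℝ) (t : ℕ → ℕ)
    (ht : ∀ n : ℕ, (t n : ℝ) =
      a ⟨n % m, Nat.mod_lt n hm⟩ * n + b ⟨n % m, Nat.mod_lt n hm⟩) :
    ∀ K : ℕ, ∃ C : ℝ, 0 ≤ C ∧ ∀ n : ℕ, ((t^[K] n : ℕ) : ℝ) ≤ C * (n+1) := by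
  have hstep : ∃ D : ℝ, 0 ≤ D ∧ ∀ n : ℕ, ((t n : ℕ) : ℝ) ≤ D * (n+1) := by
    refine ⟨(∑ r : Fin m, |a r|) + (∑ r : Fin m, |b r|), by positivity, ?_⟩
    intro n
    set ρ : Fin m := ⟨n % m, Nat.mod_lt n hm⟩
    have hA : |a ρ| ≤ ∑ r : Fin m, |a r| :=
      Finset.single_le_sum (f := fun r => |a r|) (fun i _ => abs_nonneg _) (Finset.mem_univ ρ)
    have hB : |b ρ| ≤ ∑ r : Fin m, |b r| :=
      Finset.single_le_sum (f := fun r => |b r|) (fun i _ => abs_nonneg _) (Finset.mem_univ ρ)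
    have h1 : (t n : ℝ) = a ρ * n + b ρ := ht n
    have h2 : a ρ * n ≤ |a ρ| * n :=
      mul_le_mul_of_nonneg_right (le_abs_self _) (Nat.cast_nonneg n)
    have h3 : b ρ ≤ |b ρ| := le_abs_self _
    have hn : (0:ℝ) ≤ n := Nat.cast_nonneg n
    have hAnn : (0:ℝ) ≤ ∑ r : Fin m, |a r| := Finset.sum_nonneg fun _ _ => abs_nonneg _
    have hBnn : (0:ℝ) ≤ ∑ r : Fin m, |b r| := Finset.sum_nonneg fun _ _ => abs_nonneg _
    rw [h1]
    nlinarith [mul_le_mul_of_nonneg_right hA hn]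
  obtain ⟨D, hD0, hD⟩ := hstep
  intro K
  induction K with
  | zero =>
    refine ⟨1, zero_le_one, fun n => ?_⟩
    simp only [Function.iterate_zero_apply, one_mul]
    linarith
  | succ K ih =>
    obtain ⟨C, hC0, hC⟩ := ih
    refine ⟨C * (D + 1), by positivity, ?_⟩
    intro n
    rw [Function.iterate_succ_apply]
    calc ((t^[K] (t n) : ℕ) : ℝ) ≤ C * ((t n : ℕ) + 1) := hC (t n)
      _ ≤ C * ((D * (n+1)) + 1) := by
          apply mul_le_mul_of_nonneg_left _ hC0
          linarith [hD n]
      _ ≤ C * (D + 1) * (n+1) := by nlinarith [Nat.cast_nonneg (α := ℝ) n]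

/-- Functional recurrence for the generating functions `f_k` of an
`(m,a,b)`-Collatz dynamics, in terms of the unique partial-fraction coefficients
`σ_{r,l}(z)`, `τ_{r,l}(z)` of `1/(u^{μ_r−λ_r+1}(u^{λ_r}−z^m))` and the roots
`φ_{r,l}(z) = z^{m/λ_r} e^{2πi l/λ_r}`, with initial condition `f_0(z) = z/(1−z)²`. -/
theorem stmt13 (m : ℕ) (hm : 0 < m) (a b : Fin m → ℝ) (lam mu : Fin m → ℕ)
    (hlam : ∀ r, 0 < lam r ∧ a r * m = lam r)
    (hmu : ∀ r, a r * (r : ℕ) + b r = mu r)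
    (t : ℕ → ℕ)
    (ht : ∀ n : ℕ, (t n : ℝ) =
      a ⟨n % m, Nat.mod_lt n hm⟩ * n + b ⟨n % m, Nat.mod_lt n hm⟩)
    (k : ℕ) (hk : 1 ≤ k) (z : ℂ) (hz0 : z ≠ 0) (hz1 : ‖z‖ < 1)
    (φ : Fin m → ℕ → ℂ)
    (hφ : ∀ r (l : ℕ), φ r l =
      z ^ ((m : ℂ) / (lam r)) * Complex.exp (2 * π * Complex.I * l / (lam r)))
    (σ τ : Fin m → ℕ → ℂ)
    (hdecomp : ∀ r : Fin m, ∀ u : ℂ, u ≠ 0 → (∀ l < lam r, u ≠ φ r l) →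
      (u ^ ((mu r : ℤ) - (lam r : ℤ) + 1) * (u ^ (lam r) - z ^ m))⁻¹ =
        (∑ l ∈ Finset.range (mu r + 1 - lam r), σ r l / u ^ (l + 1)) +
        ∑ l ∈ Finset.range (lam r), τ r l / (u - φ r l)) :
    (∑' n : ℕ, (t^[0] n : ℂ) * z ^ n) = z / (1 - z) ^ 2 ∧
    (∑' n : ℕ, (t^[k] n : ℂ) * z ^ n) =
      ∑ r : Fin m, z ^ (r : ℕ) *
        ((∑ l ∈ Finset.range (mu r + 1 - lam r), σ r l * (t^[k - 1] l : ℂ)) +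
          ∑ l ∈ Finset.range (lam r),
            τ r l * ∑' n : ℕ, (t^[k - 1] n : ℂ) * (φ r l) ^ n) := by
  haveI : NeZero m := ⟨hm.ne'⟩
  have hznorm : ‖z‖ < 1 := hz1
  constructor
  · simp only [Function.iterate_zero_apply]
    exact tsum_coe_mul_geometric_of_norm_lt_one hznorm
  -- Part 2
  obtain ⟨K, rfl⟩ : ∃ K, k = K + 1 := ⟨k - 1, by omega⟩
  simp only [Nat.add_sub_cancel]
  set g : ℕ → ℂ := fun n => ((t^[K] n : ℕ) : ℂ) with hgdef
  -- growth bounds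
  obtain ⟨C, hC0, hC⟩ := growth_bound m hm a b t ht K
  obtain ⟨C', hC'0, hC'⟩ := growth_bound m hm a b t ht (K + 1)
  have hgbd : ∀ n : ℕ, ‖g n‖ ≤ C * (n + 1) := by
    intro n
    rw [hgdef]
    simp only [Complex.norm_natCast]
    exact_mod_cast hC n
  -- φ bounds
  have hφ1 : ∀ (r : Fin m), ∀ l < lam r, ‖φ r l‖ < 1 := by
    intro r l _
    rw [hφ r l, norm_mul]
    have habs1 : ‖z ^ ((m : ℂ) / (lam r))‖ =
        ‖z‖ ^ ((m : ℝ) / (lam r)) := by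
      rw [Complex.norm_cpow_of_ne_zero hz0]
      have hre : ((m : ℂ) / (lam r)).re = (m : ℝ) / (lam r) := by
        rw [show ((m : ℂ) / (lam r)) = (((m : ℝ) / (lam r) : ℝ) : ℂ) by push_cast; ring]
        exact Complex.ofReal_re _
      have him : ((m : ℂ) / (lam r)).im = 0 := by
        rw [show ((m : ℂ) / (lam r)) = (((m : ℝ) / (lam r) : ℝ) : ℂ) by push_cast; ring]
        exact Complex.ofReal_im _
      rw [hre, him, mul_zero, Real.exp_zero, div_one]
    have habs2 : ‖Complex.exp (2 * π * Complex.I * l / (lam r))‖ = 1 := by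
      rw [show (2 * (π:ℂ) * Complex.I * l / (lam r)) =
          (((2 * π * l / (lam r) : ℝ)) : ℂ) * Complex.I by push_cast; ring]
      exact Complex.norm_exp_ofReal_mul_I _
    rw [habs1, habs2, mul_one]
    apply Real.rpow_lt_one (norm_nonneg _) hz1
    apply div_pos (Nat.cast_pos.mpr hm) (Nat.cast_pos.mpr (hlam r).1)
  -- z^m bound
  have hZ1 : ‖z ^ m‖ < 1 := by
    rw [norm_pow]
    exact pow_lt_one₀ (norm_nonneg _) hz1 hm.ne'
  -- t on residue classes
  have ht_step : ∀ (r : Fin m) (j : ℕ), t (j * m + (r : ℕ)) = lam r * j + mu r := by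
    intro r j
    have hmod : (j * m + (r : ℕ)) % m = (r : ℕ) := by
      rw [mul_comm j m, Nat.mul_add_mod]
      exact Nat.mod_eq_of_lt r.isLt
    have hfin : (⟨(j * m + (r : ℕ)) % m, Nat.mod_lt _ hm⟩ : Fin m) = r := by
      apply Fin.ext
      exact hmod
    have h1 := ht (j * m + (r : ℕ))
    rw [hfin] at h1
    have h2 : ((t (j * m + (r : ℕ)) : ℕ) : ℝ) = ((lam r * j + mu r : ℕ) : ℝ) := by
      rw [h1]
      have hl2 := (hlam r).2
      have hm2 := hmu r
      push_cast
      linear_combination (j : ℝ) * hl2 + hm2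
    exact_mod_cast h2
  -- apply keyC for each r
  have hkey : ∀ r : Fin m,
      ∑' j : ℕ, g (mu r + lam r * j) * (z ^ m) ^ j =
        (∑ l ∈ Finset.range (mu r + 1 - lam r), σ r l * g l) +
          ∑ l ∈ Finset.range (lam r), τ r l * ∑' n : ℕ, g n * φ r l ^ n :=
    fun r => keyC (lam r) (mu r) (z ^ m) (φ r) (σ r) (τ r) (hlam r).1 hZ1 (hφ1 r)
      (hdecomp r) g C hgbd
  -- split the tsum over residues
  set e : ℕ ≃ Fin m × ℕ := (Nat.divModEquiv m).trans (Equiv.prodComm ℕ (Fin m)) with hedef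
  have hesymm : ∀ (r : Fin m) (j : ℕ), e.symm (r, j) = j * m + (r : ℕ) := by
    intro r j
    simp [hedef, Nat.divModEquiv]
  have hf : Summable (fun n => ((t^[K+1] n : ℕ) : ℂ) * z ^ n) := by
    apply summable_poly_geom _ C' _ z hz1
    intro n
    simp only [Complex.norm_natCast]
    exact_mod_cast hC' n
  have hfe : Summable (fun p : Fin m × ℕ => ((t^[K+1] (e.symm p) : ℕ) : ℂ) * z ^ (e.symm p)) :=
    hf.comp_injective e.symm.injective
  calc ∑' n, ((t^[K+1] n : ℕ) : ℂ) * z ^ n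
      = ∑' p : Fin m × ℕ, ((t^[K+1] (e.symm p) : ℕ) : ℂ) * z ^ (e.symm p) :=
        (Equiv.tsum_eq e.symm _).symm
    _ = ∑' (r : Fin m), ∑' (j : ℕ), ((t^[K+1] (e.symm (r, j)) : ℕ) : ℂ) * z ^ (e.symm (r, j)) :=
        Summable.tsum_prod' hfe (fun r => hfe.prod_factor r)
    _ = ∑ r : Fin m, ∑' (j : ℕ), ((t^[K+1] (e.symm (r, j)) : ℕ) : ℂ) * z ^ (e.symm (r, j)) :=
        tsum_fintype _
    _ = ∑ r : Fin m, z ^ (r : ℕ) *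
        ((∑ l ∈ Finset.range (mu r + 1 - lam r), σ r l * g l) +
          ∑ l ∈ Finset.range (lam r), τ r l * ∑' n : ℕ, g n * (φ r l) ^ n) := by
        apply Finset.sum_congr rfl
        intro r _
        have hterm : ∀ j : ℕ, ((t^[K+1] (e.symm (r, j)) : ℕ) : ℂ) * z ^ (e.symm (r, j)) =
            g (mu r + lam r * j) * (z ^ m) ^ j * z ^ (r : ℕ) := by
          intro j
          rw [hesymm]
          have h1 : t^[K+1] (j * m + (r : ℕ)) = t^[K] (lam r * j + mu r) := by
            rw [Function.iterate_succ_apply, ht_step r j]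
          rw [h1]
          have h2 : (z : ℂ) ^ (j * m + (r : ℕ)) = (z ^ m) ^ j * z ^ (r : ℕ) := by
            rw [pow_add, pow_mul']
          rw [h2, hgdef]
          simp only
          rw [add_comm (lam r * j) (mu r)]
          ring
        rw [tsum_congr hterm, tsum_mul_right, hkey r]
        ring
end

section
/- Under the hypotheses of the (m,a,b)-Collatz setting, the bivariate generating function F(z,w) = Σ_{k=0}^∞ Σ_{n=0}^∞ t_k(n) z^n w^k, convergent for |z| < 1 and |w| < R_w := min{‖a‖_∞^{-1},1}, satisfies F(z,w) = z/(1−z)² + w Σ_{r=0}^{m−1} z^r ( Σ_{l=0}^{μ_r−λ_r} (σ_{r,l}(z)/l!) ∂_z^l F(0,w) + Σ_{l=0}^{λ_r−1} τ_{r,l}(z) F(φ_{r,l}(z), w) ) for all 0 < |z| < 1 and |w| < R_w. -/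
open Real

private lemma auxS {ρ : ℝ} (h0 : 0 ≤ ρ) (h1 : ρ < 1) :
    Summable (fun n : ℕ => ((n : ℝ) + 1) * ρ ^ n) := by
  have h1' : ‖ρ‖ < 1 := by rwa [Real.norm_eq_abs, abs_of_nonneg h0]
  have h2 := summable_pow_mul_geometric_of_norm_lt_one (R := ℝ) 1 h1'
  simp only [pow_one] at h2
  have h3 : Summable (fun n : ℕ => ρ ^ n) := summable_geometric_of_norm_lt_one h1'
  simpa [add_mul] using h2.add h3

private lemma auxGeomBound {ρ : ℝ} (e : ℕ → ℂ) {M : ℝ} (hb : ∀ n, ‖e n‖ ≤ M)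
    (h0 : 0 ≤ ρ) (h1 : ρ < 1) {v : ℂ} (hv : ‖v‖ ≤ ρ) :
    Summable (fun n : ℕ => e n * v ^ n) := by
  have hM : 0 ≤ M := le_trans (norm_nonneg _) (hb 0)
  have hg : Summable (fun n : ℕ => M * ρ ^ n) :=
    (summable_geometric_of_lt_one h0 h1).mul_left M
  apply Summable.of_norm
  apply hg.of_nonneg_of_le (fun n => norm_nonneg _)
  intro n
  rw [norm_mul, norm_pow]
  exact mul_le_mul (hb n) (pow_le_pow_left₀ (norm_nonneg v) hv n) (by positivity) hM

/-- Coefficient uniqueness: if a bounded-coefficient power series vanishes on a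
punctured neighbourhood of 0, all coefficients vanish. -/
private lemma auxA : ∀ (n : ℕ) (e : ℕ → ℂ) (M : ℝ), (∀ k, ‖e k‖ ≤ M) →
    (∀ v : ℂ, v ≠ 0 → ‖v‖ < 1/2 → (∑' k, e k * v ^ k) = 0) → e n = 0 := by
  have key : ∀ (e : ℕ → ℂ) (M : ℝ), (∀ k, ‖e k‖ ≤ M) →
      (∀ v : ℂ, v ≠ 0 → ‖v‖ < 1/2 → (∑' k, e k * v ^ k) = 0) →
      (e 0 = 0 ∧ ∀ v : ℂ, v ≠ 0 → ‖v‖ < 1/2 → (∑' k, e (k+1) * v ^ k) = 0) := by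
    intro e M hb h
    have hM : 0 ≤ M := le_trans (norm_nonneg _) (hb 0)
    have hshift : ∀ v : ℂ, v ≠ 0 → ‖v‖ < 1/2 →
        e 0 + v * (∑' k, e (k+1) * v ^ k) = 0 := by
      intro v hv0 hv
      have hs : Summable (fun k : ℕ => e k * v ^ k) :=
        auxGeomBound e hb (by norm_num : (0:ℝ) ≤ 1/2) (by norm_num) hv.le
      have := Summable.tsum_eq_zero_add hs
      rw [h v hv0 hv] at this
      have h2 : (∑' k, e (k+1) * v ^ (k+1)) = v * ∑' k, e (k+1) * v ^ k := by
        rw [← tsum_mul_left]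
        congr 1; funext k; ring
      rw [h2] at this
      simpa using this.symm
    have he0 : e 0 = 0 := by
      have hb' : ∀ k, ‖e (k+1)‖ ≤ M := fun k => hb (k+1)
      have hbound : ∀ v : ℂ, v ≠ 0 → ‖v‖ < 1/2 → ‖e 0‖ ≤ 2 * M * ‖v‖ := by
        intro v hv0 hv
        have h1 := hshift v hv0 hv
        have h2 : e 0 = -(v * (∑' k, e (k+1) * v ^ k)) := by linear_combination h1
        rw [h2, norm_neg, norm_mul]
        have hsum : ‖(∑' k, e (k+1) * v ^ k)‖ ≤ 2 * M := by
          have hs : Summable (fun k : ℕ => e (k+1) * v ^ k) :=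
            auxGeomBound _ hb' (by norm_num : (0:ℝ) ≤ 1/2) (by norm_num) hv.le
          calc ‖(∑' k, e (k+1) * v ^ k)‖ ≤ ∑' k, M * (1/2 : ℝ) ^ k := by
                apply tsum_of_norm_bounded ((summable_geometric_of_lt_one (by norm_num)
                  (by norm_num)).mul_left M).hasSum
                intro k
                rw [norm_mul, norm_pow]
                exact mul_le_mul (hb' k) (pow_le_pow_left₀ (norm_nonneg v) hv.le k)
                  (by positivity) hM
            _ = M * 2 := by
                rw [tsum_mul_left, tsum_geometric_of_lt_one (by norm_num) (by norm_num)]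
                norm_num
            _ = 2 * M := by ring
        calc ‖v‖ * ‖(∑' k, e (k+1) * v ^ k)‖ ≤ ‖v‖ * (2 * M) :=
              mul_le_mul_of_nonneg_left hsum (norm_nonneg v)
          _ = 2 * M * ‖v‖ := by ring
      have : ∀ ε : ℝ, 0 < ε → ‖e 0‖ ≤ 0 + ε := by
        intro ε hε
        set ξ : ℝ := min (ε / (2*M+1)) (1/4) with hξdef
        have hξpos : 0 < ξ := lt_min (by positivity) (by norm_num)
        have h1 : ‖(ξ : ℂ)‖ = ξ := by
          rw [Complex.norm_real, Real.norm_eq_abs, abs_of_pos hξpos]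
        have h2 := hbound (ξ : ℂ) (by exact_mod_cast hξpos.ne') (by rw [h1]; calc ξ ≤ 1/4 := min_le_right _ _
                                                                                  _ < 1/2 := by norm_num)
        rw [h1] at h2
        calc ‖e 0‖ ≤ 2 * M * ξ := h2
          _ ≤ 2 * M * (ε / (2*M+1)) := by
              apply mul_le_mul_of_nonneg_left (min_le_left _ _) (by positivity)
          _ ≤ ε := by
              rw [div_eq_mul_inv]
              rw [show 2*M*(ε*(2*M+1)⁻¹) = ε * ((2*M)*(2*M+1)⁻¹) by ring]
              nth_rewrite 2 [show ε = ε * 1 by ring]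
              apply mul_le_mul_of_nonneg_left _ hε.le
              rw [mul_inv_le_iff₀ (by positivity)]
              linarith
          _ = 0 + ε := by ring
      have := le_of_forall_pos_le_add this
      have h0 : ‖e 0‖ = 0 := le_antisymm this (norm_nonneg _)
      exact norm_eq_zero.mp h0
    refine ⟨he0, fun v hv0 hv => ?_⟩
    have h1 := hshift v hv0 hv
    rw [he0, zero_add] at h1
    exact (mul_eq_zero.mp h1).resolve_left hv0
  intro n
  induction n with
  | zero => intro e M hb h; exact (key e M hb h).1
  | succ n ih =>
      intro e M hb h
      exact ih (fun k => e (k+1)) M (fun k => hb (k+1)) (key e M hb h).2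

private lemma auxGeomBound' {ρ : ℝ} (e : ℕ → ℂ) {M : ℝ} (hb : ∀ n, ‖e n‖ ≤ M)
    (h0 : 0 ≤ ρ) (h1 : ρ < 1) {v : ℂ} (hv : ‖v‖ ≤ ρ) :
    Summable (fun n : ℕ => e n * v ^ n) := by
  have hM : 0 ≤ M := le_trans (norm_nonneg _) (hb 0)
  have hg : Summable (fun n : ℕ => M * ρ ^ n) :=
    (summable_geometric_of_lt_one h0 h1).mul_left M
  apply Summable.of_norm
  apply hg.of_nonneg_of_le (fun n => norm_nonneg _)
  intro n
  rw [norm_mul, norm_pow]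
  exact mul_le_mul (hb n) (pow_le_pow_left₀ (norm_nonneg v) hv n) (by positivity) hM

section STAR
variable (lam mu : ℕ) (x : ℂ) (φ σ τ : ℕ → ℂ)

private noncomputable def Efun : ℕ → ℂ := fun n =>
  if mu ≤ n ∧ lam ∣ (n - mu) then x ^ ((n - mu) / lam) else 0

private noncomputable def Sfun : ℕ → ℂ := fun n =>
  if n < mu + 1 - lam then σ n else 0

private noncomputable def Tfun : ℕ → ℂ := fun n => ∑ l ∈ Finset.range lam, τ l * φ l ^ n

variable {lam mu x φ σ τ}

private lemma Efun_apply (hlam : 0 < lam) (q : ℕ) :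
    Efun lam mu x (lam * q + mu) = x ^ q := by
  unfold Efun
  rw [if_pos]
  · congr 1
    rw [Nat.add_sub_cancel, Nat.mul_div_cancel_left _ hlam]
  · exact ⟨Nat.le_add_left _ _, by rw [Nat.add_sub_cancel]; exact Dvd.intro q rfl⟩

private lemma Efun_support (n : ℕ) (h : Efun lam mu x n ≠ 0) :
    ∃ q, lam * q + mu = n := by
  unfold Efun at h
  by_cases hc : mu ≤ n ∧ lam ∣ (n - mu)
  · obtain ⟨q, hq⟩ := hc.2
    exact ⟨q, by omega⟩
  · simp [hc] at h

private lemma auxSTAR (hlam : 0 < lam) (hx : ‖x‖ < 1)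
    (hφ : ∀ l, l < lam → ‖φ l‖ < 1)
    (hdecomp : ∀ u : ℂ, u ≠ 0 → (∀ l < lam, u ≠ φ l) →
      (u ^ ((mu : ℤ) - (lam : ℤ) + 1) * (u ^ lam - x))⁻¹ =
        (∑ l ∈ Finset.range (mu + 1 - lam), σ l / u ^ (l + 1)) +
        ∑ l ∈ Finset.range lam, τ l / (u - φ l)) :
    ∀ n : ℕ, Efun lam mu x n = Sfun lam mu σ n + Tfun lam φ τ n := by
  set N := mu + 1 - lam with hN
  set Mσ : ℝ := ∑ l ∈ Finset.range N, ‖σ l‖ with hMσ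
  set Mτ : ℝ := ∑ l ∈ Finset.range lam, ‖τ l‖ with hMτ
  have hMσ0 : 0 ≤ Mσ := Finset.sum_nonneg fun _ _ => norm_nonneg _
  have hMτ0 : 0 ≤ Mτ := Finset.sum_nonneg fun _ _ => norm_nonneg _
  -- bounds
  have hEb : ∀ n, ‖Efun lam mu x n‖ ≤ 1 := by
    intro n; unfold Efun
    split
    · rw [norm_pow]; exact pow_le_one₀ (norm_nonneg _) hx.le
    · simp
  have hSb : ∀ n, ‖Sfun lam mu σ n‖ ≤ Mσ := by
    intro n; unfold Sfun
    split
    · exact Finset.single_le_sum (f := fun l => ‖σ l‖) (fun _ _ => norm_nonneg _)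
        (Finset.mem_range.mpr (by assumption))
    · simpa using hMσ0
  have hTb : ∀ n, ‖Tfun lam φ τ n‖ ≤ Mτ := by
    intro n; unfold Tfun
    refine le_trans (norm_sum_le _ _) (Finset.sum_le_sum fun l hl => ?_)
    rw [norm_mul, norm_pow]
    have h1 : ‖φ l‖ ^ n ≤ 1 :=
      pow_le_one₀ (norm_nonneg _) (hφ l (Finset.mem_range.mp hl)).le
    calc ‖τ l‖ * ‖φ l‖ ^ n ≤ ‖τ l‖ * 1 :=
          mul_le_mul_of_nonneg_left h1 (norm_nonneg _)
      _ = ‖τ l‖ := mul_one _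
  set e : ℕ → ℂ := fun n => Efun lam mu x n - Sfun lam mu σ n - Tfun lam φ τ n with he
  have heb : ∀ n, ‖e n‖ ≤ 1 + Mσ + Mτ := by
    intro n
    calc ‖e n‖ ≤ ‖Efun lam mu x n - Sfun lam mu σ n‖ + ‖Tfun lam φ τ n‖ := norm_sub_le _ _
      _ ≤ (‖Efun lam mu x n‖ + ‖Sfun lam mu σ n‖) + ‖Tfun lam φ τ n‖ := by
          gcongr; exact norm_sub_le _ _
      _ ≤ 1 + Mσ + Mτ := by
          have := hEb n; have := hSb n; have := hTb n; linarith
  -- the vanishing of the combined series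
  have hvanish : ∀ v : ℂ, v ≠ 0 → ‖v‖ < 1/2 → (∑' n, e n * v ^ n) = 0 := by
    intro v hv0 hv
    have hv1 : ‖v‖ ≤ 1 := by linarith
    -- summabilities
    have hsE : Summable (fun n => Efun lam mu x n * v ^ n) :=
      auxGeomBound' _ hEb (by norm_num : (0:ℝ) ≤ 1/2) (by norm_num) hv.le
    have hsS : Summable (fun n => Sfun lam mu σ n * v ^ n) :=
      auxGeomBound' _ hSb (by norm_num : (0:ℝ) ≤ 1/2) (by norm_num) hv.le
    have hsT : Summable (fun n => Tfun lam φ τ n * v ^ n) :=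
      auxGeomBound' _ hTb (by norm_num : (0:ℝ) ≤ 1/2) (by norm_num) hv.le
    have hsplit : (∑' n, e n * v ^ n) =
        (∑' n, Efun lam mu x n * v ^ n) - (∑' n, Sfun lam mu σ n * v ^ n)
          - (∑' n, Tfun lam φ τ n * v ^ n) := by
      rw [← Summable.tsum_sub hsE hsS, ← Summable.tsum_sub (hsE.sub hsS) hsT]
      apply tsum_congr
      intro n
      simp only [he]
      ring
    -- (a) the E-sum
    have hxv : ‖x * v ^ lam‖ < 1 := by
      rw [norm_mul, norm_pow]
      calc ‖x‖ * ‖v‖ ^ lam ≤ ‖x‖ * 1 := by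
            apply mul_le_mul_of_nonneg_left (pow_le_one₀ (norm_nonneg _) hv1) (norm_nonneg _)
        _ = ‖x‖ := mul_one _
        _ < 1 := hx
    have hE : (∑' n, Efun lam mu x n * v ^ n) = v ^ mu * (1 - x * v ^ lam)⁻¹ := by
      have hinj : Function.Injective (fun q : ℕ => lam * q + mu) := by
        intro q q' hqq
        simp only [add_left_inj] at hqq
        exact Nat.eq_of_mul_eq_mul_left hlam hqq
      have hsupp : Function.support (fun n => Efun lam mu x n * v ^ n) ⊆
          Set.range (fun q : ℕ => lam * q + mu) := by
        intro n hn
        have hn' : Efun lam mu x n ≠ 0 := by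
          intro h0; apply hn; simp [h0]
        obtain ⟨q, hq⟩ := Efun_support n hn'
        exact ⟨q, hq⟩
      rw [← hinj.tsum_eq hsupp]
      have : (fun q : ℕ => Efun lam mu x (lam * q + mu) * v ^ (lam * q + mu)) =
          fun q : ℕ => v ^ mu * (x * v ^ lam) ^ q := by
        funext q
        rw [Efun_apply hlam, pow_add, pow_mul, mul_pow]
        ring
      rw [this, tsum_mul_left, tsum_geometric_of_norm_lt_one hxv]
    -- (b) the S-sum
    have hS : (∑' n, Sfun lam mu σ n * v ^ n) = ∑ l ∈ Finset.range N, σ l * v ^ l := by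
      rw [tsum_eq_sum (s := Finset.range N)]
      · apply Finset.sum_congr rfl
        intro l hl
        unfold Sfun
        rw [if_pos (Finset.mem_range.mp hl)]
      · intro n hn
        unfold Sfun
        rw [if_neg (fun h => hn (Finset.mem_range.mpr h)), zero_mul]
    -- (c) the T-sum
    have hφv : ∀ l, l < lam → ‖φ l * v‖ < 1 := by
      intro l hl
      rw [norm_mul]
      calc ‖φ l‖ * ‖v‖ ≤ 1 * ‖v‖ :=
            mul_le_mul_of_nonneg_right (hφ l hl).le (norm_nonneg _)
        _ = ‖v‖ := one_mul _
        _ < 1 := by linarith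
    have hT : (∑' n, Tfun lam φ τ n * v ^ n) =
        ∑ l ∈ Finset.range lam, τ l * (1 - φ l * v)⁻¹ := by
      have h1 : (fun n => Tfun lam φ τ n * v ^ n) =
          fun n => ∑ l ∈ Finset.range lam, τ l * (φ l * v) ^ n := by
        funext n
        unfold Tfun
        rw [Finset.sum_mul]
        apply Finset.sum_congr rfl
        intro l _
        rw [mul_pow]; ring
      rw [h1, Summable.tsum_finsetSum]
      · apply Finset.sum_congr rfl
        intro l hl
        rw [tsum_mul_left, tsum_geometric_of_norm_lt_one (hφv l (Finset.mem_range.mp hl))]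
      · intro l hl
        exact (summable_geometric_of_norm_lt_one (hφv l (Finset.mem_range.mp hl))).mul_left _
    -- (d) the functional identity from hdecomp
    have hu0 : (v⁻¹ : ℂ) ≠ 0 := inv_ne_zero hv0
    have hvnorm : 1 < ‖(v⁻¹ : ℂ)‖ := by
      rw [norm_inv]
      rw [lt_inv_comm₀ (by norm_num) (norm_pos_iff.mpr hv0)]
      simpa using lt_trans hv (by norm_num)
    have hune : ∀ l < lam, (v⁻¹ : ℂ) ≠ φ l := by
      intro l hl heq
      have := hφ l hl
      rw [← heq] at this
      linarith
    have hd := hdecomp v⁻¹ hu0 hune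
    have h1mxv : (1 : ℂ) - x * v ^ lam ≠ 0 := by
      intro h0
      have : x * v ^ lam = 1 := by linear_combination -h0
      rw [this] at hxv
      simp at hxv
    have h1mφv : ∀ l, l < lam → (1 : ℂ) - φ l * v ≠ 0 := by
      intro l hl h0
      have : φ l * v = 1 := by linear_combination -h0
      have h2 := hφv l hl
      rw [this] at h2
      simp at h2
    -- rewrite LHS of hd
    have eLHS : ((v⁻¹ : ℂ) ^ ((mu : ℤ) - (lam : ℤ) + 1) * ((v⁻¹) ^ lam - x))⁻¹ =
        v ^ (mu + 1) * (1 - x * v ^ lam)⁻¹ := by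
      have e2 : ((v⁻¹ : ℂ)) ^ lam - x = v ^ (-(lam : ℤ)) * (1 - x * v ^ lam) := by
        rw [mul_sub, mul_one]
        congr 1
        · rw [inv_pow, ← zpow_natCast v lam, ← zpow_neg]
        · rw [mul_comm x, ← mul_assoc, ← zpow_natCast v lam, ← zpow_add₀ hv0]
          simp
      have e1 : ((v⁻¹ : ℂ)) ^ ((mu : ℤ) - (lam : ℤ) + 1) = v ^ ((lam : ℤ) - mu - 1) := by
        rw [inv_zpow']
        congr 1
        ring
      rw [e1, e2, ← mul_assoc, ← zpow_add₀ hv0]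
      have e3 : (lam : ℤ) - mu - 1 + -(lam : ℤ) = -((mu : ℤ) + 1) := by ring
      rw [e3, mul_inv, zpow_neg, inv_inv]
      congr 1
    rw [eLHS] at hd
    -- rewrite RHS of hd
    have eS : (∑ l ∈ Finset.range N, σ l / (v⁻¹ : ℂ) ^ (l + 1)) =
        ∑ l ∈ Finset.range N, σ l * v ^ (l + 1) := by
      apply Finset.sum_congr rfl
      intro l _
      rw [inv_pow, div_eq_mul_inv, inv_inv]
    have eT : (∑ l ∈ Finset.range lam, τ l / ((v⁻¹ : ℂ) - φ l)) =
        ∑ l ∈ Finset.range lam, τ l * v * (1 - φ l * v)⁻¹ := by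
      apply Finset.sum_congr rfl
      intro l hl
      have hl' := Finset.mem_range.mp hl
      have e4 : (v⁻¹ : ℂ) - φ l = v⁻¹ * (1 - φ l * v) := by
        rw [mul_sub, mul_one]
        congr 1
        rw [mul_comm (φ l) v, ← mul_assoc, inv_mul_cancel₀ hv0, one_mul]
      rw [e4, div_eq_mul_inv, mul_inv, inv_inv]
      ring
    rw [eS, eT] at hd
    -- combine
    rw [hsplit, hE, hS, hT]
    apply mul_left_cancel₀ hv0
    rw [mul_zero, mul_sub, mul_sub]
    have c1 : v * (v ^ mu * (1 - x * v ^ lam)⁻¹) = v ^ (mu + 1) * (1 - x * v ^ lam)⁻¹ := by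
      rw [pow_succ]; ring
    have c2 : v * (∑ l ∈ Finset.range N, σ l * v ^ l) =
        ∑ l ∈ Finset.range N, σ l * v ^ (l + 1) := by
      rw [Finset.mul_sum]
      apply Finset.sum_congr rfl
      intro l _
      rw [pow_succ]; ring
    have c3 : v * (∑ l ∈ Finset.range lam, τ l * (1 - φ l * v)⁻¹) =
        ∑ l ∈ Finset.range lam, τ l * v * (1 - φ l * v)⁻¹ := by
      rw [Finset.mul_sum]
      apply Finset.sum_congr rfl
      intro l _
      ring
    rw [c1, c2, c3, hd]
    ring
  -- conclude coefficientwise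
  intro n
  have := auxA n e (1 + Mσ + Mτ) heb hvanish
  have h2 : Efun lam mu x n - Sfun lam mu σ n - Tfun lam φ τ n = 0 := this
  linear_combination h2

private lemma auxLinGeom {ρ : ℝ} (h0 : 0 ≤ ρ) (h1 : ρ < 1) :
    Summable (fun n : ℕ => ((n : ℝ) + 1) * ρ ^ n) := by
  have h1' : ‖ρ‖ < 1 := by rwa [Real.norm_eq_abs, abs_of_nonneg h0]
  have h2 := summable_pow_mul_geometric_of_norm_lt_one (R := ℝ) 1 h1'
  simp only [pow_one] at h2
  have h3 : Summable (fun n : ℕ => ρ ^ n) := summable_geometric_of_norm_lt_one h1'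
  simpa [add_mul] using h2.add h3

private lemma auxLinGeomC (c : ℕ → ℂ) {M ρ : ℝ} (hb : ∀ n, ‖c n‖ ≤ M * (n + 1))
    (h0 : 0 ≤ ρ) (h1 : ρ < 1) {v : ℂ} (hv : ‖v‖ ≤ ρ) :
    Summable (fun n : ℕ => c n * v ^ n) := by
  have hM : 0 ≤ M := by have := le_trans (norm_nonneg _) (hb 0); nlinarith
  have hg : Summable (fun n : ℕ => M * (((n:ℝ) + 1) * ρ ^ n)) :=
    (auxLinGeom h0 h1).mul_left M
  apply Summable.of_norm
  apply hg.of_nonneg_of_le (fun n => norm_nonneg _)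
  intro n
  rw [norm_mul, norm_pow]
  calc ‖c n‖ * ‖v‖ ^ n ≤ (M * (n+1)) * ρ ^ n :=
        mul_le_mul (hb n) (pow_le_pow_left₀ (norm_nonneg v) hv n) (by positivity)
          (by positivity)
    _ = M * (((n:ℝ)+1) * ρ ^ n) := by ring

private lemma auxPS {c : ℕ → ℂ} {M : ℝ} (hb : ∀ n, ‖c n‖ ≤ M * (n + 1)) {f : ℂ → ℂ}
    (hf : ∀ y : ℂ, ‖y‖ < 1 → HasSum (fun n => c n * y ^ n) (f y)) :
    HasFPowerSeriesOnBall f (FormalMultilinearSeries.ofScalars ℂ c) 0 1 := by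
  have hM : 0 ≤ M := by
    have := le_trans (norm_nonneg _) (hb 0); nlinarith
  constructor
  · -- 1 ≤ radius
    apply ENNReal.le_of_forall_nnreal_lt
    intro r hr
    have hr1 : (r : ℝ) < 1 := by exact_mod_cast hr
    apply FormalMultilinearSeries.le_radius_of_summable_norm
    have hg : Summable (fun n : ℕ => M * (((n:ℝ) + 1) * (r:ℝ) ^ n)) :=
      (auxLinGeom r.coe_nonneg hr1).mul_left M
    apply hg.of_nonneg_of_le (fun n => by positivity)
    intro n
    rw [FormalMultilinearSeries.ofScalars_norm]
    calc ‖c n‖ * (r:ℝ) ^ n ≤ (M * (n+1)) * (r:ℝ) ^ n := by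
          apply mul_le_mul_of_nonneg_right (hb n) (by positivity)
      _ = M * (((n:ℝ)+1) * (r:ℝ) ^ n) := by ring
  · exact one_pos
  · intro y hy
    have hy' : ‖y‖ < 1 := by
      simpa [mem_eball_zero_iff, enorm_eq_nnnorm, ← ENNReal.coe_one, ENNReal.coe_lt_coe,
        ← NNReal.coe_lt_coe] using hy
    have h2 := hf y hy'
    have h3 : (fun n => FormalMultilinearSeries.ofScalars ℂ c n fun _ => y)
        = fun n => c n * y ^ n := by
      funext n
      rw [FormalMultilinearSeries.ofScalars_apply_eq, smul_eq_mul]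
    rw [h3, zero_add]
    exact h2

private lemma auxIterDeriv {c : ℕ → ℂ} {M : ℝ} (hb : ∀ n, ‖c n‖ ≤ M * (n + 1)) {f : ℂ → ℂ}
    (hf : ∀ y : ℂ, ‖y‖ < 1 → HasSum (fun n => c n * y ^ n) (f y)) (l : ℕ) :
    iteratedDeriv l f 0 = (Nat.factorial l : ℂ) * c l := by
  have h := (auxPS hb hf).factorial_smul (1 : ℂ) l
  rw [iteratedDeriv_eq_iteratedFDeriv, ← h, FormalMultilinearSeries.ofScalars_apply_eq]
  simp [Nat.smul_one_eq_cast]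

private lemma auxSTAR2 (hlam : 0 < lam) (hx : ‖x‖ < 1)
    (hφ : ∀ l, l < lam → ‖φ l‖ < 1)
    (hdecomp : ∀ u : ℂ, u ≠ 0 → (∀ l < lam, u ≠ φ l) →
      (u ^ ((mu : ℤ) - (lam : ℤ) + 1) * (u ^ lam - x))⁻¹ =
        (∑ l ∈ Finset.range (mu + 1 - lam), σ l / u ^ (l + 1)) +
        ∑ l ∈ Finset.range lam, τ l / (u - φ l))
    (g : ℕ → ℂ) (C : ℝ) (hg : ∀ n, ‖g n‖ ≤ C * (n + 1)) :
    ∑' q : ℕ, g (lam * q + mu) * x ^ q =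
      (∑ l ∈ Finset.range (mu + 1 - lam), σ l * g l) +
      ∑ l ∈ Finset.range lam, τ l * ∑' n : ℕ, g n * φ l ^ n := by
  have hstar := auxSTAR (σ := σ) (τ := τ) hlam hx hφ hdecomp
  set N := mu + 1 - lam with hN
  have hsS : Summable (fun n => g n * Sfun lam mu σ n) := by
    apply summable_of_ne_finset_zero (s := Finset.range N)
    intro n hn
    have : Sfun lam mu σ n = 0 := by
      unfold Sfun
      rw [if_neg (fun h => hn (Finset.mem_range.mpr h))]
    rw [this, mul_zero]
  have hsTl : ∀ l, l < lam → Summable (fun n => g n * φ l ^ n) := by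
    intro l hl
    exact auxLinGeomC g hg (norm_nonneg _) (hφ l hl) le_rfl
  have hsT : Summable (fun n => g n * Tfun lam φ τ n) := by
    have : (fun n => g n * Tfun lam φ τ n) =
        fun n => ∑ l ∈ Finset.range lam, τ l * (g n * φ l ^ n) := by
      funext n
      unfold Tfun
      rw [Finset.mul_sum]
      apply Finset.sum_congr rfl
      intro l _
      ring
    rw [this]
    apply summable_sum
    intro l hl
    exact ((hsTl l (Finset.mem_range.mp hl)).mul_left (τ l))
  -- LHS
  have hinj : Function.Injective (fun q : ℕ => lam * q + mu) := by
    intro q q' hqq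
    simp only [add_left_inj] at hqq
    exact Nat.eq_of_mul_eq_mul_left hlam hqq
  have hsupp : Function.support (fun n => g n * Efun lam mu x n) ⊆
      Set.range (fun q : ℕ => lam * q + mu) := by
    intro n hn
    have hn' : Efun lam mu x n ≠ 0 := by
      intro h0; apply hn; simp [h0]
    obtain ⟨q, hq⟩ := Efun_support n hn'
    exact ⟨q, hq⟩
  have hL : (∑' q : ℕ, g (lam * q + mu) * x ^ q) = ∑' n, g n * Efun lam mu x n := by
    rw [← hinj.tsum_eq hsupp]
    apply tsum_congr
    intro q
    have := Efun_apply (x := x) (mu := mu) hlam q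
    simp only [this]
  rw [hL]
  have hEeq : (fun n => g n * Efun lam mu x n) =
      fun n => g n * Sfun lam mu σ n + g n * Tfun lam φ τ n := by
    funext n
    rw [hstar n]
    ring
  rw [hEeq, Summable.tsum_add hsS hsT]
  congr 1
  · rw [tsum_eq_sum (s := Finset.range N)]
    · apply Finset.sum_congr rfl
      intro l hl
      unfold Sfun
      rw [if_pos (Finset.mem_range.mp hl)]
      ring
    · intro n hn
      have : Sfun lam mu σ n = 0 := by
        unfold Sfun
        rw [if_neg (fun h => hn (Finset.mem_range.mpr h))]
      rw [this, mul_zero]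
  · have h1 : (fun n => g n * Tfun lam φ τ n) =
        fun n => ∑ l ∈ Finset.range lam, τ l * (g n * φ l ^ n) := by
      funext n
      unfold Tfun
      rw [Finset.mul_sum]
      apply Finset.sum_congr rfl
      intro l _
      ring
    rw [h1, Summable.tsum_finsetSum]
    · apply Finset.sum_congr rfl
      intro l hl
      rw [tsum_mul_left]
    · intro l hl
      exact ((hsTl l (Finset.mem_range.mp hl)).mul_left (τ l))
set_option maxHeartbeats 1600000 in
/-- Functional equation for the bivariate generating function
`F(z,w) = Σ_k Σ_n t_k(n) z^n w^k` of an `(m,a,b)`-Collatz dynamics: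
`F(z,w) = z/(1−z)² + w Σ_r z^r ( Σ_l (σ_{r,l}(z)/l!) ∂_z^l F(0,w)
  + Σ_l τ_{r,l}(z) F(φ_{r,l}(z), w) )`,
for `0 < |z| < 1` and `|w| < R_w = min{‖a‖_∞⁻¹, 1}`. -/
theorem stmt14 (m : ℕ) (hm : 0 < m) (a b : Fin m → ℝ) (lam mu : Fin m → ℕ)
    (hlam : ∀ r, 0 < lam r ∧ a r * m = lam r)
    (hmu : ∀ r, a r * (r : ℕ) + b r = mu r)
    (t : ℕ → ℕ)
    (ht : ∀ n : ℕ, (t n : ℝ) =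
      a ⟨n % m, Nat.mod_lt n hm⟩ * n + b ⟨n % m, Nat.mod_lt n hm⟩)
    (A : ℝ) (hA : IsGreatest (Set.range fun r => |a r|) A)
    (z w : ℂ) (hz0 : z ≠ 0) (hz1 : ‖z‖ < 1)
    (hw : ‖w‖ < min A⁻¹ 1)
    (φ : Fin m → ℕ → ℂ)
    (hφ : ∀ r (l : ℕ), φ r l =
      z ^ ((m : ℂ) / (lam r)) * Complex.exp (2 * π * Complex.I * l / (lam r)))
    (σ τ : Fin m → ℕ → ℂ)
    (hdecomp : ∀ r : Fin m, ∀ u : ℂ, u ≠ 0 → (∀ l < lam r, u ≠ φ r l) →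
      (u ^ ((mu r : ℤ) - (lam r : ℤ) + 1) * (u ^ (lam r) - z ^ m))⁻¹ =
        (∑ l ∈ Finset.range (mu r + 1 - lam r), σ r l / u ^ (l + 1)) +
        ∑ l ∈ Finset.range (lam r), τ r l / (u - φ r l)) :
    (∑' p : ℕ × ℕ, (t^[p.1] p.2 : ℂ) * z ^ p.2 * w ^ p.1) =
      z / (1 - z) ^ 2 +
      w * ∑ r : Fin m, z ^ (r : ℕ) *
        ((∑ l ∈ Finset.range (mu r + 1 - lam r),
            (σ r l / (Nat.factorial l : ℂ)) *
              iteratedDeriv l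
                (fun z' => ∑' p : ℕ × ℕ, (t^[p.1] p.2 : ℂ) * z' ^ p.2 * w ^ p.1) 0) +
          ∑ l ∈ Finset.range (lam r),
            τ r l * ∑' p : ℕ × ℕ, (t^[p.1] p.2 : ℂ) * (φ r l) ^ p.2 * w ^ p.1) := by
  -- notation
  have hz1' : ‖z‖ < 1 := hz1
  have hw' : ‖w‖ < min A⁻¹ 1 := hw
  set c : ℕ → ℕ → ℂ := fun k n => ((t^[k] n : ℕ) : ℂ) with hcdef
  have hceq : ∀ k n : ℕ, ((t^[k] n : ℕ) : ℂ) = c k n := fun _ _ => rfl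
  -- basic positivity facts
  set M : ℝ := max A 1 with hMdef
  set B : ℝ := ∑ r : Fin m, |b r| with hBdef
  have hM1 : 1 ≤ M := le_max_right _ _
  have hM0 : 0 < M := lt_of_lt_of_le one_pos hM1
  have hB0 : 0 ≤ B := Finset.sum_nonneg fun _ _ => abs_nonneg _
  have haA : ∀ r : Fin m, |a r| ≤ A := fun r => hA.2 ⟨r, rfl⟩
  have hbB : ∀ r : Fin m, |b r| ≤ B := fun r =>
    Finset.single_le_sum (f := fun r => |b r|) (fun _ _ => abs_nonneg _) (Finset.mem_univ r)
  have hA0 : 0 < A := by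
    have h1 := (hlam ⟨0, hm⟩).1
    have h2 := (hlam ⟨0, hm⟩).2
    have ha : 0 < a ⟨0, hm⟩ := by
      have hmr : (0:ℝ) < m := by exact_mod_cast hm
      have hl : (0:ℝ) < lam ⟨0, hm⟩ := by exact_mod_cast h1
      nlinarith
    calc (0:ℝ) < a ⟨0, hm⟩ := ha
      _ ≤ |a ⟨0, hm⟩| := le_abs_self _
      _ ≤ A := haA ⟨0, hm⟩
  -- |w| * M < 1
  have hw1 : ‖w‖ < 1 := lt_of_lt_of_le hw' (min_le_right _ _)
  have hwA : ‖w‖ < A⁻¹ := lt_of_lt_of_le hw' (min_le_left _ _)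
  have hw0 : 0 ≤ ‖w‖ := norm_nonneg _
  set s : ℝ := ‖w‖ * M with hsdef
  have hs0 : 0 ≤ s := mul_nonneg hw0 hM0.le
  have hs1 : s < 1 := by
    rcases le_total A 1 with hA1 | hA1
    · have : M = 1 := max_eq_right hA1
      rw [hsdef, this, mul_one]; exact hw1
    · have : M = A := max_eq_left hA1
      rw [hsdef, this]
      calc ‖w‖ * A < A⁻¹ * A := by
            apply mul_lt_mul_of_pos_right hwA hA0
        _ = 1 := inv_mul_cancel₀ hA0.ne'
  -- growth bound for iterates
  have hgrow : ∀ k n : ℕ, ((t^[k] n : ℕ) : ℝ) ≤ M ^ k * ((n : ℝ) + B * k + 1) := by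
    intro k
    induction k with
    | zero => intro n; simp
    | succ k ih =>
        intro n
        rw [Function.iterate_succ_apply']
        set N := t^[k] n with hNdef
        have hNb : ((N : ℕ) : ℝ) ≤ M ^ k * ((n : ℝ) + B * k + 1) := ih n
        have htN := ht N
        set i : Fin m := ⟨N % m, Nat.mod_lt N hm⟩ with hidef
        have hstep : ((t N : ℕ) : ℝ) ≤ M * ((N : ℕ) : ℝ) + B := by
          rw [htN]
          have h1 : a i * (N : ℝ) ≤ M * (N : ℝ) := by
            apply mul_le_mul_of_nonneg_right _ (Nat.cast_nonneg N)
            calc a i ≤ |a i| := le_abs_self _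
              _ ≤ A := haA i
              _ ≤ M := le_max_left _ _
          have h2 : b i ≤ B := le_trans (le_abs_self _) (hbB i)
          linarith
        have hMk : (1:ℝ) ≤ M ^ (k+1) := one_le_pow₀ hM1
        calc ((t N : ℕ) : ℝ) ≤ M * ((N : ℕ) : ℝ) + B := hstep
          _ ≤ M * (M ^ k * ((n : ℝ) + B * k + 1)) + B := by
              have := mul_le_mul_of_nonneg_left hNb hM0.le
              linarith
          _ = M ^ (k+1) * ((n : ℝ) + B * k + 1) + B := by ring
          _ ≤ M ^ (k+1) * ((n : ℝ) + B * k + 1) + M ^ (k+1) * B := by nlinarith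
          _ = M ^ (k+1) * ((n : ℝ) + B * ((k:ℝ)+1) + 1) := by ring
          _ = M ^ (k+1) * ((n : ℝ) + B * ((k+1 : ℕ) : ℝ) + 1) := by push_cast; ring
  -- coefficient norm bound
  have normc : ∀ k n : ℕ, ‖c k n‖ ≤ (M ^ k * ((B + 1) * (k + 1))) * ((n : ℝ) + 1) := by
    intro k n
    have h1 : ‖c k n‖ = ((t^[k] n : ℕ) : ℝ) := by
      rw [hcdef]
      simp [Complex.norm_natCast]
    rw [h1]
    have hMk : (0:ℝ) < M ^ k := pow_pos hM0 k
    have k0 : (0:ℝ) ≤ (k:ℝ) := Nat.cast_nonneg k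
    have n0 : (0:ℝ) ≤ (n:ℝ) := Nat.cast_nonneg n
    have h2 : (n:ℝ) + B * k + 1 ≤ ((B+1)*((k:ℝ)+1))*((n:ℝ)+1) := by
      nlinarith [mul_nonneg (mul_nonneg hB0 k0) n0, mul_nonneg hB0 n0,
        mul_nonneg k0 n0, mul_nonneg hB0 k0]
    calc ((t^[k] n : ℕ) : ℝ) ≤ M ^ k * ((n : ℝ) + B * k + 1) := hgrow k n
      _ ≤ M ^ k * (((B+1)*((k:ℝ)+1))*((n:ℝ)+1)) := mul_le_mul_of_nonneg_left h2 hMk.le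
      _ = (M ^ k * ((B + 1) * ((k:ℝ) + 1))) * ((n : ℝ) + 1) := by ring
  -- master summability of the double series
  have hsumnorm : ∀ x : ℂ, ‖x‖ < 1 →
      Summable (fun p : ℕ × ℕ => ‖c p.1 p.2 * x ^ p.2 * w ^ p.1‖) := by
    intro x hx
    have hx0 : 0 ≤ ‖x‖ := norm_nonneg _
    have hf : Summable (fun k : ℕ => (B + 1) * (((k : ℝ) + 1) * s ^ k)) :=
      (auxLinGeom hs0 hs1).mul_left (B + 1)
    have hg : Summable (fun n : ℕ => ((n : ℝ) + 1) * ‖x‖ ^ n) := auxLinGeom hx0 hx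
    have hfg := hf.mul_of_nonneg hg
      (fun k => by positivity) (fun n => by positivity)
    apply hfg.of_nonneg_of_le (fun p => norm_nonneg _)
    intro p
    obtain ⟨k, n⟩ := p
    simp only
    rw [norm_mul, norm_mul, norm_pow, norm_pow]
    calc ‖c k n‖ * ‖x‖ ^ n * ‖w‖ ^ k
        ≤ ((M ^ k * ((B + 1) * (k + 1))) * ((n : ℝ) + 1)) * ‖x‖ ^ n * ‖w‖ ^ k := by
          apply mul_le_mul_of_nonneg_right _ (by positivity)
          apply mul_le_mul_of_nonneg_right (normc k n) (by positivity)
      _ = ((B + 1) * (((k : ℝ) + 1) * (M ^ k * ‖w‖ ^ k))) * (((n : ℝ) + 1) * ‖x‖ ^ n) := by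
          ring
      _ = (B + 1) * (((k : ℝ) + 1) * s ^ k) * (((n : ℝ) + 1) * ‖x‖ ^ n) := by
          rw [hsdef, mul_pow]
          ring
  have hsumm : ∀ x : ℂ, ‖x‖ < 1 →
      Summable (fun p : ℕ × ℕ => c p.1 p.2 * x ^ p.2 * w ^ p.1) :=
    fun x hx => (hsumnorm x hx).of_norm
  -- summability in k for fixed n
  have hsecknorm : ∀ n : ℕ, Summable (fun k : ℕ => ‖c k n * w ^ k‖) := by
    intro n
    have hf : Summable (fun k : ℕ => ((B + 1) * ((n:ℝ) + 1)) * (((k : ℝ) + 1) * s ^ k)) :=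
      (auxLinGeom hs0 hs1).mul_left _
    apply hf.of_nonneg_of_le (fun k => norm_nonneg _)
    intro k
    rw [norm_mul, norm_pow]
    calc ‖c k n‖ * ‖w‖ ^ k ≤ ((M ^ k * ((B + 1) * (k + 1))) * ((n : ℝ) + 1)) * ‖w‖ ^ k := by
          apply mul_le_mul_of_nonneg_right (normc k n) (by positivity)
      _ = ((B + 1) * ((n:ℝ) + 1)) * (((k : ℝ) + 1) * (M ^ k * ‖w‖ ^ k)) := by ring
      _ = ((B + 1) * ((n:ℝ) + 1)) * (((k : ℝ) + 1) * s ^ k) := by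
          rw [hsdef, mul_pow]; ring
  have hseck : ∀ n : ℕ, Summable (fun k : ℕ => c k n * w ^ k) :=
    fun n => (hsecknorm n).of_norm
  set d : ℕ → ℂ := fun n => ∑' k : ℕ, c k n * w ^ k with hddef
  set Ks : ℝ := ∑' k : ℕ, ((k : ℝ) + 1) * s ^ k with hKsdef
  have hKsum : Summable (fun k : ℕ => ((k : ℝ) + 1) * s ^ k) := auxLinGeom hs0 hs1
  have hdb : ∀ n : ℕ, ‖d n‖ ≤ ((B + 1) * Ks) * ((n : ℝ) + 1) := by
    intro n
    calc ‖d n‖ ≤ ∑' k : ℕ, ‖c k n * w ^ k‖ := norm_tsum_le_tsum_norm (hsecknorm n)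
      _ ≤ ∑' k : ℕ, ((B + 1) * ((n:ℝ) + 1)) * (((k : ℝ) + 1) * s ^ k) := by
          apply Summable.tsum_le_tsum _ (hsecknorm n) (hKsum.mul_left _)
          intro k
          rw [norm_mul, norm_pow]
          calc ‖c k n‖ * ‖w‖ ^ k
              ≤ ((M ^ k * ((B + 1) * (k + 1))) * ((n : ℝ) + 1)) * ‖w‖ ^ k := by
                apply mul_le_mul_of_nonneg_right (normc k n) (by positivity)
            _ = ((B + 1) * ((n:ℝ) + 1)) * (((k : ℝ) + 1) * (M ^ k * ‖w‖ ^ k)) := by ring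
            _ = ((B + 1) * ((n:ℝ) + 1)) * (((k : ℝ) + 1) * s ^ k) := by
                rw [hsdef, mul_pow]; ring
      _ = ((B + 1) * ((n:ℝ) + 1)) * Ks := by rw [tsum_mul_left]
      _ = ((B + 1) * Ks) * ((n : ℝ) + 1) := by ring
  -- the function F as a power series in its first variable
  have hFy : ∀ y : ℂ, ‖y‖ < 1 →
      HasSum (fun n : ℕ => d n * y ^ n)
        (∑' p : ℕ × ℕ, c p.1 p.2 * y ^ p.2 * w ^ p.1) := by
    intro y hy
    have h1 : HasSum (fun p : ℕ × ℕ => c p.1 p.2 * y ^ p.2 * w ^ p.1)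
        (∑' p : ℕ × ℕ, c p.1 p.2 * y ^ p.2 * w ^ p.1) := (hsumm y hy).hasSum
    have h2 := (Equiv.prodComm ℕ ℕ).hasSum_iff.mpr h1
    have h3 : ∀ n : ℕ, HasSum (fun k : ℕ => c k n * y ^ n * w ^ k) (d n * y ^ n) := by
      intro n
      have h4 := (hseck n).hasSum.mul_right (y ^ n)
      have h5 : (fun k : ℕ => c k n * w ^ k * y ^ n) = fun k : ℕ => c k n * y ^ n * w ^ k := by
        funext k; ring
      rw [h5] at h4
      rw [hddef]
      exact h4
    exact HasSum.prod_fiberwise h2 h3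
  have hiterF : ∀ l : ℕ,
      iteratedDeriv l
        (fun z' => ∑' p : ℕ × ℕ, (t^[p.1] p.2 : ℂ) * z' ^ p.2 * w ^ p.1) 0 =
      (Nat.factorial l : ℂ) * d l := by
    intro l
    exact auxIterDeriv hdb (fun y hy => hFy y hy) l
  -- restate hiterF in c-form
  have hiterFc : ∀ l : ℕ,
      iteratedDeriv l
        (fun z' => ∑' p : ℕ × ℕ, c p.1 p.2 * z' ^ p.2 * w ^ p.1) 0 =
      (Nat.factorial l : ℂ) * d l := fun l =>
    auxIterDeriv hdb (fun y hy => hFy y hy) l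
  -- sections in n
  have hsecn : ∀ (k : ℕ) (x : ℂ), ‖x‖ < 1 → Summable (fun n : ℕ => c k n * x ^ n) :=
    fun k x hx => auxLinGeomC _ (fun n => normc k n) (norm_nonneg x) hx le_rfl
  -- summability of k ↦ (∑' n, c k n x^n) * w^k
  have hsfgen : ∀ x : ℂ, ‖x‖ < 1 →
      Summable (fun k : ℕ => (∑' n : ℕ, c k n * x ^ n) * w ^ k) := by
    intro x hx
    set Gx : ℝ := ∑' n : ℕ, ((n:ℝ) + 1) * ‖x‖ ^ n with hGxdef
    have hGxs : Summable (fun n : ℕ => ((n:ℝ) + 1) * ‖x‖ ^ n) :=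
      auxLinGeom (norm_nonneg x) hx
    have hGx0 : 0 ≤ Gx := tsum_nonneg (fun n => by positivity)
    have hnormsum : ∀ k n : ℕ, Summable (fun n : ℕ => ‖c k n * x ^ n‖) := by
      intro k n
      have hb : Summable (fun n : ℕ => (M ^ k * ((B+1)*((k:ℝ)+1))) * (((n:ℝ)+1) * ‖x‖ ^ n)) :=
        hGxs.mul_left _
      apply hb.of_nonneg_of_le (fun n => norm_nonneg _)
      intro j
      rw [norm_mul, norm_pow]
      calc ‖c k j‖ * ‖x‖ ^ j ≤ ((M ^ k * ((B+1)*((k:ℝ)+1))) * ((j:ℝ)+1)) * ‖x‖ ^ j :=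
            mul_le_mul_of_nonneg_right (normc k j) (by positivity)
        _ = (M ^ k * ((B+1)*((k:ℝ)+1))) * (((j:ℝ)+1) * ‖x‖ ^ j) := by ring
    have hfb : ∀ k : ℕ, ‖(∑' n : ℕ, c k n * x ^ n)‖ ≤ (M ^ k * ((B+1)*((k:ℝ)+1))) * Gx := by
      intro k
      calc ‖(∑' n : ℕ, c k n * x ^ n)‖ ≤ ∑' n : ℕ, ‖c k n * x ^ n‖ :=
            norm_tsum_le_tsum_norm (hnormsum k 0)
        _ ≤ ∑' n : ℕ, (M ^ k * ((B+1)*((k:ℝ)+1))) * (((n:ℝ)+1) * ‖x‖ ^ n) := by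
            apply Summable.tsum_le_tsum _ (hnormsum k 0) (hGxs.mul_left _)
            intro j
            rw [norm_mul, norm_pow]
            calc ‖c k j‖ * ‖x‖ ^ j ≤ ((M ^ k * ((B+1)*((k:ℝ)+1))) * ((j:ℝ)+1)) * ‖x‖ ^ j :=
                  mul_le_mul_of_nonneg_right (normc k j) (by positivity)
              _ = (M ^ k * ((B+1)*((k:ℝ)+1))) * (((j:ℝ)+1) * ‖x‖ ^ j) := by ring
        _ = (M ^ k * ((B+1)*((k:ℝ)+1))) * Gx := by rw [tsum_mul_left]
    have hcomp : Summable (fun k : ℕ => ((B+1) * Gx) * (((k:ℝ)+1) * s ^ k)) :=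
      (auxLinGeom hs0 hs1).mul_left _
    apply Summable.of_norm
    apply hcomp.of_nonneg_of_le (fun k => norm_nonneg _)
    intro k
    rw [norm_mul, norm_pow]
    calc ‖(∑' n : ℕ, c k n * x ^ n)‖ * ‖w‖ ^ k
        ≤ ((M ^ k * ((B+1)*((k:ℝ)+1))) * Gx) * ‖w‖ ^ k :=
          mul_le_mul_of_nonneg_right (hfb k) (by positivity)
      _ = ((B+1) * Gx) * (((k:ℝ)+1) * (M ^ k * ‖w‖ ^ k)) := by ring
      _ = ((B+1) * Gx) * (((k:ℝ)+1) * s ^ k) := by rw [hsdef, mul_pow]; ring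
  set f : ℕ → ℂ := fun k => ∑' n : ℕ, c k n * z ^ n with hfdef
  have hsf : Summable (fun k : ℕ => f k * w ^ k) := hsfgen z hz1'
  -- step 1
  have st1 : (∑' p : ℕ × ℕ, c p.1 p.2 * z ^ p.2 * w ^ p.1) = ∑' k : ℕ, f k * w ^ k := by
    have hsec2 : ∀ k : ℕ, Summable (fun n : ℕ => c k n * z ^ n * w ^ k) :=
      fun k => (hsecn k z hz1').mul_right _
    rw [Summable.tsum_prod' (hsumm z hz1') hsec2]
    apply tsum_congr
    intro k
    simp only [hfdef]
    exact tsum_mul_right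
  -- step 2
  have st2 : (∑' k : ℕ, f k * w ^ k) = f 0 + ∑' k : ℕ, f (k+1) * w ^ (k+1) := by
    rw [Summable.tsum_eq_zero_add hsf]
    simp only [pow_zero, mul_one]
  -- step 3
  have st3 : f 0 = z / (1 - z) ^ 2 := by
    rw [hfdef]
    have h1 : (fun n : ℕ => c 0 n * z ^ n) = fun n : ℕ => (n : ℂ) * z ^ n := by
      funext n
      rw [hcdef]
      simp
    simp only [h1]
    exact tsum_coe_mul_geometric_of_norm_lt_one hz1'
  -- residue-class description of t
  have hpoint : ∀ (q : ℕ) (r : Fin m), t (q * m + (r : ℕ)) = lam r * q + mu r := by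
    intro q r
    have hmod : (q * m + (r : ℕ)) % m = (r : ℕ) := by
      rw [mul_comm q m, Nat.mul_add_mod]
      exact Nat.mod_eq_of_lt r.isLt
    have hidx : (⟨(q * m + (r:ℕ)) % m, Nat.mod_lt _ hm⟩ : Fin m) = r := by
      apply Fin.ext
      simp [hmod]
    have h1 := ht (q * m + (r:ℕ))
    rw [hidx] at h1
    have h2 : ((t (q*m+(r:ℕ)) : ℕ) : ℝ) = ((lam r * q + mu r : ℕ) : ℝ) := by
      rw [h1]
      push_cast
      rw [← (hlam r).2, ← hmu r]
      ring
    exact_mod_cast h2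
  have hzm1 : ‖z ^ m‖ < 1 := by
    rw [norm_pow]
    exact pow_lt_one₀ (norm_nonneg z) hz1' hm.ne'
  -- coefficient bounds along arithmetic progressions
  have hgb : ∀ (k : ℕ) (r : Fin m), ∀ q : ℕ,
      ‖c k (lam r * q + mu r)‖ ≤
        (M ^ k * ((B+1)*((k:ℝ)+1)) * ((lam r : ℝ) + mu r + 1)) * ((q:ℝ)+1) := by
    intro k r q
    have h1 := normc k (lam r * q + mu r)
    have hcast : ((lam r * q + mu r : ℕ) : ℝ) = (lam r : ℝ) * q + mu r := by push_cast; ring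
    rw [hcast] at h1
    have hl0 : (0:ℝ) ≤ (lam r : ℝ) := Nat.cast_nonneg _
    have hm0 : (0:ℝ) ≤ (mu r : ℝ) := Nat.cast_nonneg _
    have hq0 : (0:ℝ) ≤ (q : ℝ) := Nat.cast_nonneg _
    have hMk : (0:ℝ) ≤ M ^ k * ((B+1)*((k:ℝ)+1)) := by positivity
    calc ‖c k (lam r * q + mu r)‖ ≤ M ^ k * ((B+1)*((k:ℝ)+1)) * ((lam r : ℝ) * q + mu r + 1) := h1
      _ ≤ M ^ k * ((B+1)*((k:ℝ)+1)) * (((lam r : ℝ) + mu r + 1) * ((q:ℝ)+1)) := by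
          apply mul_le_mul_of_nonneg_left _ hMk
          nlinarith [mul_nonneg hm0 hq0, mul_nonneg hl0 hq0]
      _ = (M ^ k * ((B+1)*((k:ℝ)+1)) * ((lam r : ℝ) + mu r + 1)) * ((q:ℝ)+1) := by ring
  have hgsum : ∀ (k : ℕ) (r : Fin m),
      Summable (fun q : ℕ => c k (lam r * q + mu r) * (z ^ m) ^ q) :=
    fun k r => auxLinGeomC _ (hgb k r) (norm_nonneg _) hzm1 le_rfl
  -- step 4 : unfolding one application of t
  haveI : NeZero m := ⟨hm.ne'⟩
  have st4 : ∀ k : ℕ, f (k+1) =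
      ∑ r : Fin m, z ^ (r : ℕ) * ∑' q : ℕ, c k (lam r * q + mu r) * (z ^ m) ^ q := by
    intro k
    have hck : ∀ n : ℕ, c (k+1) n = c k (t n) := by
      intro n
      rw [hcdef]
      simp [Function.iterate_succ_apply]
    have hsum1 : Summable (fun n : ℕ => c k (t n) * z ^ n) := by
      have := hsecn (k+1) z hz1'
      apply this.congr
      intro n
      rw [hck]
    have hEsymm : ∀ p : ℕ × Fin m, (Nat.divModEquiv m).symm p = p.1 * m + (p.2 : ℕ) :=
      fun p => rfl
    have hsum2 : Summable (fun p : ℕ × Fin m =>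
        c k (t (p.1 * m + (p.2 : ℕ))) * z ^ (p.1 * m + (p.2 : ℕ))) := by
      have h5 := ((Nat.divModEquiv m).symm.summable_iff
        (f := fun n => c k (t n) * z ^ n)).mpr hsum1
      apply h5.congr
      intro p
      rfl
    have hsum3 : ∀ r : Fin m, Summable (fun q : ℕ =>
        c k (t (q * m + (r : ℕ))) * z ^ (q * m + (r : ℕ))) := by
      intro r
      have h6 : (fun q : ℕ => c k (t (q * m + (r : ℕ))) * z ^ (q * m + (r : ℕ))) =
          fun q : ℕ => (c k (lam r * q + mu r) * (z ^ m) ^ q) * z ^ (r : ℕ) := by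
        funext q
        rw [hpoint q r, pow_add, ← pow_mul, mul_comm m q, pow_mul]
        ring
      rw [h6]
      exact (hgsum k r).mul_right _
    calc f (k+1) = ∑' n : ℕ, c k (t n) * z ^ n := by
          rw [hfdef]
          apply tsum_congr
          intro n
          rw [hck]
      _ = ∑' p : ℕ × Fin m, c k (t (p.1 * m + (p.2 : ℕ))) * z ^ (p.1 * m + (p.2 : ℕ)) := by
          rw [← ((Nat.divModEquiv m).symm.tsum_eq (fun n => c k (t n) * z ^ n))]
          apply tsum_congr
          intro p
          rfl
      _ = ∑' q : ℕ, ∑' r : Fin m, c k (t (q * m + (r : ℕ))) * z ^ (q * m + (r : ℕ)) :=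
          Summable.tsum_prod' hsum2 (fun q => Summable.of_finite)
      _ = ∑' q : ℕ, ∑ r : Fin m, c k (t (q * m + (r : ℕ))) * z ^ (q * m + (r : ℕ)) :=
          tsum_congr (fun q => tsum_fintype _)
      _ = ∑ r : Fin m, ∑' q : ℕ, c k (t (q * m + (r : ℕ))) * z ^ (q * m + (r : ℕ)) := by
          rw [Summable.tsum_finsetSum]
          intro r _
          exact hsum3 r
      _ = ∑ r : Fin m, z ^ (r : ℕ) * ∑' q : ℕ, c k (lam r * q + mu r) * (z ^ m) ^ q := by
          apply Finset.sum_congr rfl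
          intro r _
          have h6 : (fun q : ℕ => c k (t (q * m + (r : ℕ))) * z ^ (q * m + (r : ℕ))) =
              fun q : ℕ => (c k (lam r * q + mu r) * (z ^ m) ^ q) * z ^ (r : ℕ) := by
            funext q
            rw [hpoint q r, pow_add, ← pow_mul, mul_comm m q, pow_mul]
            ring
          rw [h6, tsum_mul_right]
          ring
  -- norms of the phi values
  have hφnorm : ∀ (r : Fin m) (l : ℕ), l < lam r → ‖φ r l‖ < 1 := by
    intro r l hl
    rw [hφ r l, norm_mul]
    have hexp : ‖Complex.exp (2 * (π:ℂ) * Complex.I * l / (lam r))‖ = 1 := by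
      have hrw : (2 * (π:ℂ) * Complex.I * l / (lam r)) =
          ((2 * π * l / (lam r) : ℝ) : ℂ) * Complex.I := by
        push_cast
        ring
      rw [hrw, Complex.norm_exp_ofReal_mul_I]
    have hcpow : ‖z ^ ((m:ℂ) / (lam r))‖ < 1 := by
      have hlr0 : (0:ℝ) < (lam r : ℝ) := by exact_mod_cast (hlam r).1
      have hm0' : (0:ℝ) < (m:ℝ) := by exact_mod_cast hm
      have hre : ((m:ℂ) / ((lam r : ℕ) : ℂ)) = (((m / (lam r) : ℝ)) : ℂ) := by
        push_cast
        ring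
      rw [hre, Complex.norm_cpow_of_ne_zero hz0]
      rw [Complex.ofReal_re, Complex.ofReal_im, mul_zero, Real.exp_zero, div_one]
      exact Real.rpow_lt_one (norm_nonneg z) hz1 (by positivity)
    rw [hexp, mul_one]
    exact hcpow
  -- step 5 : the partial fraction identity applied coefficientwise
  have st5 : ∀ (k : ℕ) (r : Fin m),
      (∑' q : ℕ, c k (lam r * q + mu r) * (z ^ m) ^ q) =
        (∑ l ∈ Finset.range (mu r + 1 - lam r), σ r l * c k l) +
        ∑ l ∈ Finset.range (lam r), τ r l * ∑' n : ℕ, c k n * (φ r l) ^ n := by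
    intro k r
    exact auxSTAR2 (hlam r).1 hzm1 (fun l hl => hφnorm r l hl) (hdecomp r)
      (fun n => c k n) _ (normc k)
  -- double sums at the phi points
  have hinner : ∀ (r : Fin m) (l : ℕ), l < lam r →
      (∑' k : ℕ, (∑' n : ℕ, c k n * (φ r l) ^ n) * w ^ k) =
      ∑' p : ℕ × ℕ, c p.1 p.2 * (φ r l) ^ p.2 * w ^ p.1 := by
    intro r l hl
    have hx := hφnorm r l hl
    have hsec2 : ∀ k : ℕ, Summable (fun n : ℕ => c k n * (φ r l) ^ n * w ^ k) :=
      fun k => (hsecn k _ hx).mul_right _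
    rw [Summable.tsum_prod' (hsumm _ hx) hsec2]
    apply tsum_congr
    intro k
    exact tsum_mul_right.symm
  -- summability of the sigma parts
  have hsumP : ∀ r : Fin m, Summable (fun k : ℕ =>
      (∑ l ∈ Finset.range (mu r + 1 - lam r), σ r l * c k l) * w ^ k) := by
    intro r
    have h1 : (fun k : ℕ => (∑ l ∈ Finset.range (mu r + 1 - lam r), σ r l * c k l) * w ^ k)
        = fun k : ℕ => ∑ l ∈ Finset.range (mu r + 1 - lam r), σ r l * (c k l * w ^ k) := by
      funext k
      rw [Finset.sum_mul]
      apply Finset.sum_congr rfl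
      intro l _
      ring
    rw [h1]
    apply summable_sum
    intro l _
    exact (hseck l).mul_left _
  have hsumQ : ∀ r : Fin m, Summable (fun k : ℕ =>
      (∑ l ∈ Finset.range (lam r), τ r l * ∑' n : ℕ, c k n * (φ r l) ^ n) * w ^ k) := by
    intro r
    have h1 : (fun k : ℕ => (∑ l ∈ Finset.range (lam r),
          τ r l * ∑' n : ℕ, c k n * (φ r l) ^ n) * w ^ k)
        = fun k : ℕ => ∑ l ∈ Finset.range (lam r),
            τ r l * ((∑' n : ℕ, c k n * (φ r l) ^ n) * w ^ k) := by
      funext k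
      rw [Finset.sum_mul]
      apply Finset.sum_congr rfl
      intro l _
      ring
    rw [h1]
    apply summable_sum
    intro l hl
    exact (hsfgen _ (hφnorm r l (Finset.mem_range.mp hl))).mul_left _
  -- step 6 : the tail rearrangement
  have st6 : (∑' k : ℕ, f (k+1) * w ^ (k+1)) = w * ∑ r : Fin m, z ^ (r : ℕ) *
      ((∑ l ∈ Finset.range (mu r + 1 - lam r), σ r l * d l) +
       ∑ l ∈ Finset.range (lam r),
         τ r l * ∑' p : ℕ × ℕ, c p.1 p.2 * (φ r l) ^ p.2 * w ^ p.1) := by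
    set X : Fin m → ℕ → ℂ := fun r k =>
      (∑ l ∈ Finset.range (mu r + 1 - lam r), σ r l * c k l) +
      ∑ l ∈ Finset.range (lam r), τ r l * ∑' n : ℕ, c k n * (φ r l) ^ n with hXdef
    have hXsum : ∀ r : Fin m, Summable (fun k : ℕ => X r k * w ^ k) := by
      intro r
      have := (hsumP r).add (hsumQ r)
      apply this.congr
      intro k
      rw [hXdef]
      ring
    have stepa : ∀ k : ℕ, f (k+1) = ∑ r : Fin m, z ^ (r : ℕ) * X r k := by
      intro k
      rw [st4 k]
      apply Finset.sum_congr rfl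
      intro r _
      rw [st5 k r]
    calc (∑' k : ℕ, f (k+1) * w ^ (k+1))
        = ∑' k : ℕ, w * ((∑ r : Fin m, z ^ (r : ℕ) * X r k) * w ^ k) := by
          apply tsum_congr
          intro k
          rw [stepa k, pow_succ]
          ring
      _ = w * ∑' k : ℕ, (∑ r : Fin m, z ^ (r : ℕ) * X r k) * w ^ k := tsum_mul_left
      _ = w * ∑' k : ℕ, ∑ r : Fin m, z ^ (r : ℕ) * (X r k * w ^ k) := by
          congr 1
          apply tsum_congr
          intro k
          rw [Finset.sum_mul]
          apply Finset.sum_congr rfl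
          intro r _
          ring
      _ = w * ∑ r : Fin m, ∑' k : ℕ, z ^ (r : ℕ) * (X r k * w ^ k) := by
          congr 1
          rw [Summable.tsum_finsetSum]
          intro r _
          exact (hXsum r).mul_left _
      _ = w * ∑ r : Fin m, z ^ (r : ℕ) * ∑' k : ℕ, X r k * w ^ k := by
          congr 1
          apply Finset.sum_congr rfl
          intro r _
          rw [tsum_mul_left]
      _ = w * ∑ r : Fin m, z ^ (r : ℕ) *
          ((∑ l ∈ Finset.range (mu r + 1 - lam r), σ r l * d l) +
           ∑ l ∈ Finset.range (lam r),
             τ r l * ∑' p : ℕ × ℕ, c p.1 p.2 * (φ r l) ^ p.2 * w ^ p.1) := by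
          congr 1
          apply Finset.sum_congr rfl
          intro r _
          congr 1
          have hsplit : (fun k : ℕ => X r k * w ^ k) = fun k : ℕ =>
              (∑ l ∈ Finset.range (mu r + 1 - lam r), σ r l * c k l) * w ^ k +
              (∑ l ∈ Finset.range (lam r), τ r l * ∑' n : ℕ, c k n * (φ r l) ^ n) * w ^ k := by
            funext k
            rw [hXdef]
            ring
          rw [hsplit, Summable.tsum_add (hsumP r) (hsumQ r)]
          congr 1
          · -- sigma part
            have h2 : (fun k : ℕ =>
                (∑ l ∈ Finset.range (mu r + 1 - lam r), σ r l * c k l) * w ^ k)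
                = fun k : ℕ => ∑ l ∈ Finset.range (mu r + 1 - lam r),
                    σ r l * (c k l * w ^ k) := by
              funext k
              rw [Finset.sum_mul]
              apply Finset.sum_congr rfl
              intro l _
              ring
            rw [h2, Summable.tsum_finsetSum (fun l _ => (hseck l).mul_left _)]
            apply Finset.sum_congr rfl
            intro l _
            rw [tsum_mul_left]
          · -- tau part
            have h2 : (fun k : ℕ =>
                (∑ l ∈ Finset.range (lam r), τ r l * ∑' n : ℕ, c k n * (φ r l) ^ n) * w ^ k)
                = fun k : ℕ => ∑ l ∈ Finset.range (lam r),
                    τ r l * ((∑' n : ℕ, c k n * (φ r l) ^ n) * w ^ k) := by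
              funext k
              rw [Finset.sum_mul]
              apply Finset.sum_congr rfl
              intro l _
              ring
            rw [h2, Summable.tsum_finsetSum (fun l hl =>
              (hsfgen _ (hφnorm r l (Finset.mem_range.mp hl))).mul_left _)]
            apply Finset.sum_congr rfl
            intro l hl
            rw [tsum_mul_left, hinner r l (Finset.mem_range.mp hl)]
  -- final assembly
  simp only [hceq]
  rw [st1, st2, st3, st6]
  congr 1
  congr 1
  apply Finset.sum_congr rfl
  intro r _
  congr 1
  congr 1
  apply Finset.sum_congr rfl
  intro l _
  rw [hiterFc l]
  have hfact : ((Nat.factorial l : ℕ) : ℂ) ≠ 0 :=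
    Nat.cast_ne_zero.mpr (Nat.factorial_ne_zero l)
  field_simp
end STAR
end
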